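/- arXiv:2011.08732 — 12 statements merged into one kernel-verified Lean document; each statement's English description precedes it below -/
import Mathlib

section
/- Let p be a prime, k a positive integer, and n > gcd(k, p-1). Let c_1, ..., c_n be integers each coprime to p. Then the congruence c_1 x_1^k + ... + c_n x_n^k ≡ 0 (mod p) has a solution with x_1 not divisible by p. -/
/-!
Let `S` be the set of `k`-th powers of units of `ZMod p`. Since `(ZMod p)ˣ` is cyclic of order
`p - 1`, `|S| = (p - 1) / d` with `d = gcd(k, p - 1)`. By iterated Cauchy–Davenport the sumset
`c₁ S + c₂ (S ∪ {0}) + ⋯ + cₙ (S ∪ {0})` has at least `min(p, n |S|)` elements, and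
`n |S| ≥ (d + 1)(p - 1) / d ≥ p`, so it is all of `ZMod p`; in particular it contains `0`.
-/

open Finset Pointwise

theorem IsCyclic.card_image_pow {G : Type*} [CommGroup G] [IsCyclic G] [Fintype G]
    [DecidableEq G] (k : ℕ) :
    #(univ.image (· ^ k : G → G)) = Fintype.card G / (Fintype.card G).gcd k := by
  rw [← Nat.card_eq_fintype_card, ← IsCyclic.card_powMonoidHom_range, ← Set.toFinset_range,
    ← Nat.card_eq_card_toFinset]
  rfl

namespace ZMod

theorem cauchy_davenport_finset_sum {p : ℕ} (hp : p.Prime) {ι : Type*} (t : Finset ι)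
    {f : ι → Finset (ZMod p)} (hf : ∀ i ∈ t, (f i).Nonempty) :
    min p (∑ i ∈ t, (#(f i) - 1) + 1) ≤ #(∑ i ∈ t, f i) := by
  induction t using Finset.cons_induction with
  | empty => simp
  | cons a t _ ih =>
    rw [sum_cons, sum_cons]
    have hft : ∀ i ∈ t, (f i).Nonempty := fun i hi ↦ hf i (mem_cons_of_mem hi)
    have hfa : (f a).Nonempty := hf a (mem_cons_self a t)
    have hih := ih hft
    have hp2 := hp.two_le
    have hcd := cauchy_davenport hp hfa (t := ∑ i ∈ t, f i) (card_pos.mp (by omega))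
    have := hfa.card_pos
    omega

theorem finset_sum_eq_univ_of_le {p : ℕ} [Fact p.Prime] {ι : Type*} (t : Finset ι)
    {f : ι → Finset (ZMod p)} (hf : ∀ i ∈ t, (f i).Nonempty)
    (h : p ≤ ∑ i ∈ t, (#(f i) - 1) + 1) : ∑ i ∈ t, f i = univ := by
  have hcd := cauchy_davenport_finset_sum Fact.out t hf
  have hle := card_le_univ (∑ i ∈ t, f i)
  rw [ZMod.card] at hle
  exact eq_univ_of_card _ (by rw [ZMod.card]; omega)

def unitPowers (p k : ℕ) [NeZero p] : Finset (ZMod p) :=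
  (univ.image (· ^ k : (ZMod p)ˣ → (ZMod p)ˣ)).image Units.val

theorem mem_unitPowers {p k : ℕ} [Fact p.Prime] {y : ZMod p} :
    y ∈ unitPowers p k ↔ ∃ z ≠ 0, z ^ k = y := by
  simp only [unitPowers, mem_image, mem_univ, true_and, exists_exists_eq_and,
    Units.val_pow_eq_pow_val]
  exact ⟨fun ⟨u, hu⟩ ↦ ⟨u, u.ne_zero, hu⟩, fun ⟨z, hz, hzy⟩ ↦ ⟨Units.mk0 z hz, hzy⟩⟩

theorem sub_one_eq_gcd_mul_card_unitPowers (p k : ℕ) [Fact p.Prime] :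
    p - 1 = k.gcd (p - 1) * #(unitPowers p k) := by
  rw [unitPowers, card_image_of_injective _ Units.val_injective, IsCyclic.card_image_pow,
    ZMod.card_units, Nat.gcd_comm, Nat.mul_div_cancel' (Nat.gcd_dvd_left _ _)]

theorem zero_notMem_unitPowers (p k : ℕ) [Fact p.Prime] :
    (0 : ZMod p) ∉ unitPowers p k := fun h ↦ by
  obtain ⟨u, -, hu⟩ := mem_image.mp h
  exact u.ne_zero hu

theorem unitPowers_nonempty (p k : ℕ) [Fact p.Prime] : (unitPowers p k).Nonempty :=
  ⟨1, mem_unitPowers.mpr ⟨1, one_ne_zero, one_pow k⟩⟩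

theorem sum_smul_unitPowers_eq_univ {p : ℕ} [Fact p.Prime] {k : ℕ} {ι : Type*} [Fintype ι]
    [DecidableEq ι] (hι : k.gcd (p - 1) < Fintype.card ι) (c : ι → (ZMod p)ˣ) (i₀ : ι) :
    ∑ i, c i • (if i = i₀ then unitPowers p k else insert 0 (unitPowers p k)) =
      univ := by
  set S := unitPowers p k
  have hS : S.Nonempty := unitPowers_nonempty p k
  refine finset_sum_eq_univ_of_le _ (fun i _ ↦ ?_) ?_
  · split_ifs
    exacts [hS.smul_finset, (insert_nonempty 0 S).smul_finset]
  have hB : ∀ i ∈ univ.erase i₀, #(if i = i₀ then S else insert 0 S) - 1 = #S := fun i hi ↦ by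
    rw [if_neg (mem_erase.mp hi).1, card_insert_of_notMem (zero_notMem_unitPowers p k),
      Nat.add_sub_cancel]
  rw [← add_sum_erase _ _ (mem_univ i₀)]
  simp only [card_smul_finset]
  rw [sum_const_nat hB, card_erase_of_mem (mem_univ _), card_univ, if_true]
  have hcard : p - 1 = k.gcd (p - 1) * #S := sub_one_eq_gcd_mul_card_unitPowers p k
  have hmul : k.gcd (p - 1) * #S ≤ (Fintype.card ι - 1) * #S :=
    Nat.mul_le_mul_right #S (Nat.le_sub_one_of_lt hι)
  have := hS.card_pos
  omega

theorem exists_sum_mul_pow_eq_zero {p : ℕ} [Fact p.Prime] {k : ℕ} (hk : k ≠ 0)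
    {ι : Type*} [Fintype ι] [DecidableEq ι] (hι : k.gcd (p - 1) < Fintype.card ι)
    (c : ι → (ZMod p)ˣ) (i₀ : ι) :
    ∃ x : ι → ZMod p, x i₀ ≠ 0 ∧ ∑ i, (c i : ZMod p) * x i ^ k = 0 := by
  have h0 := mem_univ (0 : ZMod p)
  rw [← sum_smul_unitPowers_eq_univ hι c i₀, ← mem_coe, coe_sum, Set.mem_fintype_sum] at h0
  obtain ⟨g, hg, hg0⟩ := h0
  have hroot : ∀ i, ∃ z, (i = i₀ → z ≠ 0) ∧ (c i : ZMod p) * z ^ k = g i := by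
    intro i
    obtain ⟨y, hy, hyg⟩ := mem_smul_finset.mp (hg i)
    rw [← hyg, Units.smul_def]
    by_cases hi : i = i₀
    · rw [if_pos hi] at hy
      obtain ⟨z, hz0, rfl⟩ := mem_unitPowers.mp hy
      exact ⟨z, fun _ ↦ hz0, rfl⟩
    · rw [if_neg hi] at hy
      rcases mem_insert.mp hy with rfl | hy
      · exact ⟨0, fun h ↦ absurd h hi, by simp [zero_pow hk]⟩
      · obtain ⟨z, -, rfl⟩ := mem_unitPowers.mp hy
        exact ⟨z, fun h ↦ absurd h hi, rfl⟩
  choose x hx0 hx using hroot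
  exact ⟨x, hx0 i₀ rfl, by simp only [hx, hg0]⟩

end ZMod

theorem stmt_0 (p k n : ℕ) (hp : p.Prime) (hk : 1 ≤ k)
    (hn : Nat.gcd k (p - 1) < n) (c : Fin n → ℤ)
    (hc : ∀ i, IsCoprime (c i) (p : ℤ)) :
    ∃ x : Fin n → ℤ, ¬ (p : ℤ) ∣ x ⟨0, by omega⟩ ∧
      (p : ℤ) ∣ ∑ i, c i * x i ^ k := by
  have : Fact p.Prime := ⟨hp⟩
  have hunit : ∀ i, IsUnit (c i : ZMod p) := fun i ↦
    isCoprime_zero_right.mp (by simpa using (hc i).map (Int.castRingHom (ZMod p)))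
  obtain ⟨x, hx0, hx⟩ := ZMod.exists_sum_mul_pow_eq_zero (Nat.one_le_iff_ne_zero.mp hk)
    (by simpa using hn) (fun i ↦ (hunit i).unit) ⟨0, by omega⟩
  refine ⟨fun i ↦ (x i).cast, ?_, ?_⟩
  · rwa [← ZMod.intCast_zmod_eq_zero_iff_dvd, ZMod.intCast_zmod_cast]
  · rw [← ZMod.intCast_zmod_eq_zero_iff_dvd]
    simpa [ZMod.intCast_zmod_cast] using hx
end

section
/- Let p be a prime and n, s natural numbers with s ≥ np - n + 1. Given integers α_{ij} for 1 ≤ i ≤ n and 1 ≤ j ≤ s, there exist ε_1, ..., ε_s ∈ {0,1}, not all zero, such that for every i with 1 ≤ i ≤ n, the sum over j of ε_j · α_{ij} is congruent to 0 modulo p. -/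
theorem stmt_1 (p n s : ℕ) (hp : p.Prime) (hs : n * p - n + 1 ≤ s)
    (α : Fin n → Fin s → ℤ) :
    ∃ ε : Fin s → ℤ, (∀ j, ε j = 0 ∨ ε j = 1) ∧ (∃ j, ε j ≠ 0) ∧
      ∀ i, (p : ℤ) ∣ ∑ j, ε j * α i j := by
  haveI : Fact p.Prime := ⟨hp⟩
  have hp1 : p - 1 ≠ 0 := by have := hp.two_le; omega
  set f : Fin n → MvPolynomial (Fin s) (ZMod p) :=
    fun i => ∑ j, MvPolynomial.C ((α i j : ZMod p)) * MvPolynomial.X j ^ (p - 1) with hf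
  have hdeg : ∀ i, (f i).totalDegree ≤ p - 1 := by
    intro i
    refine le_trans (MvPolynomial.totalDegree_finset_sum _ _) ?_
    apply Finset.sup_le
    intro j _
    refine le_trans (MvPolynomial.totalDegree_mul _ _) ?_
    simp only [MvPolynomial.totalDegree_C, MvPolynomial.totalDegree_X_pow, zero_add, le_refl]
  have hsum : (∑ i, (f i).totalDegree) < Fintype.card (Fin s) := by
    calc (∑ i, (f i).totalDegree) ≤ ∑ _i : Fin n, (p - 1) :=
          Finset.sum_le_sum fun i _ => hdeg i
      _ = n * (p - 1) := by simp [mul_comm]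
      _ < Fintype.card (Fin s) := by
          have : n * (p - 1) = n * p - n := by
            cases p with
            | zero => exact absurd rfl hp.ne_zero
            | succ q => simp [Nat.mul_succ, Nat.succ_sub_one]
          simp only [Fintype.card_fin]
          omega
  have hdvd := char_dvd_card_solutions_of_fintype_sum_lt p hsum
  have hdvd' : p ∣ Fintype.card { x : Fin s → ZMod p // ∀ i, MvPolynomial.eval x (f i) = 0 } := by
    convert hdvd using 2
  have hzero : ∀ i, MvPolynomial.eval (0 : Fin s → ZMod p) (f i) = 0 := by
    intro i
    simp [hf, zero_pow hp1]
  have hcardpos : 0 < Fintype.card { x : Fin s → ZMod p // ∀ i, MvPolynomial.eval x (f i) = 0 } :=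
    Fintype.card_pos_iff.mpr ⟨⟨0, hzero⟩⟩
  have hcard2 : 2 ≤ Fintype.card { x : Fin s → ZMod p // ∀ i, MvPolynomial.eval x (f i) = 0 } := by
    have := Nat.le_of_dvd hcardpos hdvd'
    have := hp.two_le
    omega
  obtain ⟨⟨x, hx⟩, ⟨y, hy⟩, hxy⟩ := Fintype.exists_pair_of_one_lt_card hcard2
  have hex : ∃ z : Fin s → ZMod p, (∀ i, MvPolynomial.eval z (f i) = 0) ∧ z ≠ 0 := by
    by_cases hx0 : x = 0
    · refine ⟨y, hy, ?_⟩
      intro hy0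
      exact hxy (by simp [hx0, hy0])
    · exact ⟨x, hx, hx0⟩
  obtain ⟨z, hz, hz0⟩ := hex
  refine ⟨fun j => if z j = 0 then 0 else 1, fun j => by by_cases h : z j = 0 <;> simp [h],
    ?_, ?_⟩
  · obtain ⟨j, hj⟩ := Function.ne_iff.mp hz0
    refine ⟨j, ?_⟩
    simp only [Pi.zero_apply] at hj
    simp [hj]
  · intro i
    have key : ((∑ j, (if z j = 0 then (0:ℤ) else 1) * α i j : ℤ) : ZMod p) = 0 := by
      refine Eq.trans ?_ (hz i)
      rw [hf]
      simp only [MvPolynomial.eval_sum, MvPolynomial.eval_mul, MvPolynomial.eval_C,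
        MvPolynomial.eval_pow, MvPolynomial.eval_X]
      push_cast
      refine Finset.sum_congr rfl fun j _ => ?_
      by_cases h : z j = 0
      · simp [h, zero_pow hp1]
      · rw [ZMod.pow_card_sub_one_eq_one h]
        simp [h, mul_comm]
    exact (ZMod.intCast_zmod_eq_zero_iff_dvd _ p).mp key
end

section
/- Let p be a prime and s ≥ 3p - 2. For any integers a_1, ..., a_s and b_1, ..., b_s, there exists a nonempty subset J of {1, ..., s} with |J| ≤ p such that both ∑_{j ∈ J} a_j ≡ 0 (mod p) and ∑_{j ∈ J} b_j ≡ 0 (mod p). -/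
/-!
Evaluating `∑ⱼ cⱼ Xⱼ^(q-1)` over a field with `q` elements at `x` gives the sum of
the `cⱼ` over the support of `x`, so by Chevalley–Warning the vectors `x` whose support
has zero sum are counted by a multiple of the characteristic once `m (q - 1)` is less than
the number of variables. Adding the weight `1` as a third coordinate, `3p - 2` vectors of
`(ℤ/p)²` contain a nonempty zero-sum subsequence of length `p` or `2p`. In the second case,
count again on those `2p` terms: the `(p-1)^{2p} ≡ 1` vectors with full support and the
zero vector are solutions, so for odd `p` some solution has a proper nonempty support, and
either it or its complement has at most `p` terms. For `p = 2` pigeonhole on the three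
nonzero vectors of `(ℤ/2)²` suffices.
-/

open MvPolynomial Finset

section FiniteField

variable {K ι : Type*} [Field K] [Fintype K] [Fintype ι]

noncomputable def supportSumPoly (c : ι → K) : MvPolynomial ι K :=
  ∑ j, C (c j) * X j ^ (Fintype.card K - 1)

theorem totalDegree_supportSumPoly_le (c : ι → K) :
    (supportSumPoly c).totalDegree ≤ Fintype.card K - 1 := by
  refine (totalDegree_finsetSum _ _).trans <| Finset.sup_le fun j _ => ?_
  refine (totalDegree_mul _ _).trans ?_
  rw [totalDegree_C, zero_add]
  exact (totalDegree_pow _ _).trans (by simp [totalDegree_X])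

variable [DecidableEq K]

theorem eval_supportSumPoly (c : ι → K) (x : ι → K) :
    eval x (supportSumPoly c) = ∑ j with x j ≠ 0, c j := by
  have hq : Fintype.card K - 1 ≠ 0 := by have := Fintype.one_lt_card (α := K); omega
  rw [supportSumPoly, map_sum, sum_filter]
  refine sum_congr rfl fun j _ => ?_
  by_cases h : x j = 0
  · simp [h, zero_pow hq]
  · simp [h, FiniteField.pow_card_sub_one_eq_one _ h]

variable [DecidableEq ι] {m : ℕ}

theorem ringChar_dvd_card_supportSum_eq_zero (v : ι → Fin m → K)
    (h : m * (Fintype.card K - 1) < Fintype.card ι) :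
    ringChar K ∣ Fintype.card {x : ι → K // ∑ j with x j ≠ 0, v j = 0} := by
  have hdeg : ∑ i, (supportSumPoly (v · i)).totalDegree < Fintype.card ι :=
    calc _ ≤ ∑ _ : Fin m, (Fintype.card K - 1) :=
          sum_le_sum fun i _ => totalDegree_supportSumPoly_le _
      _ < _ := by simpa using h
  convert char_dvd_card_solutions_of_fintype_sum_lt (ringChar K) hdeg using 4 with x
  simp only [eval_supportSumPoly, funext_iff, Finset.sum_apply, Pi.zero_apply]

theorem exists_nonempty_sum_eq_zero (v : ι → Fin m → K)
    (h : m * (Fintype.card K - 1) < Fintype.card ι) :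
    ∃ J : Finset ι, J.Nonempty ∧ ∑ j ∈ J, v j = 0 := by
  have zero_mem : ∑ j with (0 : ι → K) j ≠ 0, v j = 0 := by simp
  have one_lt : 1 < Fintype.card {x : ι → K // ∑ j with x j ≠ 0, v j = 0} :=
    (CharP.char_is_prime K (ringChar K)).one_lt.trans_le <| Nat.le_of_dvd
      (Fintype.card_pos_iff.2 ⟨⟨0, zero_mem⟩⟩) (ringChar_dvd_card_supportSum_eq_zero v h)
  obtain ⟨⟨x, hx⟩, hx0⟩ := Fintype.exists_ne_of_one_lt_card one_lt ⟨0, zero_mem⟩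
  obtain ⟨j, hj⟩ := Function.ne_iff.1 fun h => hx0 (Subtype.ext h)
  exact ⟨_, ⟨j, by simpa using hj⟩, hx⟩

theorem exists_nonempty_ne_univ_sum_eq_zero (hK : ringChar K ≠ 2) (v : ι → Fin m → K)
    (h : m * (Fintype.card K - 1) < Fintype.card ι) (hι : Even (Fintype.card ι))
    (hv : ∑ j, v j = 0) :
    ∃ J : Finset ι, J.Nonempty ∧ J ≠ univ ∧ ∑ j ∈ J, v j = 0 := by
  by_contra! hJ
  set full : Finset (ι → K) := Fintype.piFinset fun _ => univ.erase 0
  have hsol : ({x | ∑ j with x j ≠ 0, v j = 0} : Finset (ι → K)) = insert 0 full := by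
    ext x
    simp only [mem_filter, mem_univ, true_and, mem_insert, full, Fintype.mem_piFinset, mem_erase,
      and_true]
    constructor
    · intro hx
      by_contra! ⟨hx0, k, hk⟩
      obtain ⟨j, hj⟩ := Function.ne_iff.1 hx0
      refine hJ _ ⟨j, by simpa using hj⟩ (fun hu => ?_) hx
      have hk' := mem_univ k
      rw [← hu, mem_filter] at hk'
      exact hk'.2 hk
    · rintro (rfl | hx)
      · simp
      · simpa [filter_true_of_mem fun j _ => hx j] using hv
  have hfull : (full.card : K) = 1 := by
    have : ((Fintype.card K - 1 : ℕ) : K) = -1 := by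
      rw [Nat.cast_pred Fintype.card_pos, FiniteField.cast_card_eq_zero, zero_sub]
    simp [full, card_erase_of_mem, this, hι.neg_one_pow]
  have hzero : (0 : ι → K) ∉ full := by
    obtain ⟨j⟩ : Nonempty ι := Fintype.card_pos_iff.1 (by omega)
    simpa [full, Fintype.mem_piFinset] using ⟨j⟩
  have hcard := (CharP.cast_eq_zero_iff K (ringChar K) _).2
    (ringChar_dvd_card_supportSum_eq_zero v h)
  rw [Fintype.card_subtype, hsol, card_insert_of_notMem hzero, Nat.cast_succ, hfull,
    one_add_one_eq_two] at hcard
  exact Ring.two_ne_zero hK hcard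

theorem exists_nonempty_card_eq_zero_sum_eq_zero (v : ι → Fin m → K)
    (h : (m + 1) * (Fintype.card K - 1) < Fintype.card ι) :
    ∃ J : Finset ι, J.Nonempty ∧ (#J : K) = 0 ∧ ∑ j ∈ J, v j = 0 := by
  obtain ⟨J, hJ, hsum⟩ := exists_nonempty_sum_eq_zero (fun j => Fin.cons 1 (v j)) h
  exact ⟨J, hJ, by simpa using congrFun hsum 0,
    funext fun i => by simpa using congrFun hsum i.succ⟩

end FiniteField

section ZMod

variable {ι : Type*} [DecidableEq ι]

theorem exists_sum_eq_zero_card_le_two [Fintype ι] {m : ℕ} (v : ι → Fin m → ZMod 2)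
    (h : 2 ^ m ≤ Fintype.card ι) :
    ∃ J : Finset ι, J.Nonempty ∧ #J ≤ 2 ∧ ∑ j ∈ J, v j = 0 := by
  by_cases h0 : ∃ j, v j = 0
  · obtain ⟨j, hj⟩ := h0
    exact ⟨{j}, singleton_nonempty j, by simp, by simpa⟩
  push Not at h0
  have hcard : Fintype.card {x : Fin m → ZMod 2 // x ≠ 0} < Fintype.card ι := by
    simp only [ne_eq, Fintype.card_subtype_compl, Fintype.card_pi, ZMod.card, prod_const,
      card_univ, Fintype.card_fin, Fintype.card_unique]
    have := Nat.one_le_two_pow (n := m)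
    omega
  obtain ⟨i, j, hij, hv⟩ := Fintype.exists_ne_map_eq_of_card_lt
    (fun j => (⟨v j, h0 j⟩ : {x : Fin m → ZMod 2 // x ≠ 0})) hcard
  refine ⟨{i, j}, insert_nonempty _ _, card_le_two, ?_⟩
  rw [sum_pair hij, show v i = v j from congrArg Subtype.val hv]
  ext k
  exact CharTwo.add_self_eq_zero (v j k)

variable {p : ℕ} [Fact p.Prime]

theorem exists_subset_sum_eq_zero_card_le_of_card_eq_two_mul (hp : p ≠ 2)
    (v : ι → Fin 2 → ZMod p) {s : Finset ι} (hs : #s = 2 * p) (hv : ∑ j ∈ s, v j = 0) :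
    ∃ J ⊆ s, J.Nonempty ∧ #J ≤ p ∧ ∑ j ∈ J, v j = 0 := by
  have hK : ringChar (ZMod p) ≠ 2 := by rwa [ZMod.ringChar_zmod_n]
  obtain ⟨J, hJ, hJs, hJv⟩ := exists_nonempty_ne_univ_sum_eq_zero hK (fun j : s => v j)
    (by simp [hs, (Fact.out : p.Prime).pos]) (by simp [hs]) (by rwa [sum_coe_sort s v])
  set I := J.map (Function.Embedding.subtype (· ∈ s))
  have hIs : I ⊆ s := fun _ => J.property_of_mem_map_subtype
  have hIv : ∑ j ∈ I, v j = 0 := by simpa [I] using hJv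
  by_cases hIp : #I ≤ p
  · exact ⟨I, hIs, hJ.map, hIp, hIv⟩
  have hIlt : #I < #s := by simpa [I] using card_lt_card (ssubset_univ_iff.2 hJs)
  have hcard := card_sdiff_of_subset hIs
  refine ⟨s \ I, sdiff_subset, card_pos.1 (by omega), by omega, ?_⟩
  rw [sum_sdiff_eq_sub hIs, hv, hIv, sub_zero]

theorem exists_subset_sum_eq_zero_card_le_of_card_eq_three_mul_sub_two (hp : p ≠ 2)
    (v : ι → Fin 2 → ZMod p) {s : Finset ι} (hs : #s = 3 * p - 2) :
    ∃ J ⊆ s, J.Nonempty ∧ #J ≤ p ∧ ∑ j ∈ J, v j = 0 := by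
  have hp2 := (Fact.out : p.Prime).two_le
  obtain ⟨J, hJ, hJp, hJv⟩ := exists_nonempty_card_eq_zero_sum_eq_zero (fun j : s => v j)
    (by simp only [Nat.reduceAdd, ZMod.card, Fintype.card_coe, hs]; omega)
  set I := J.map (Function.Embedding.subtype (· ∈ s))
  have hIs : I ⊆ s := fun _ => J.property_of_mem_map_subtype
  have hIv : ∑ j ∈ I, v j = 0 := by simpa [I] using hJv
  obtain ⟨k, hk⟩ : p ∣ #I := by simpa [I, ZMod.natCast_eq_zero_iff] using hJp
  have hIcard := card_le_card hIs
  have hI0 : 0 < #I := hJ.map.card_pos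
  have hk3 : k < 3 := by
    by_contra! hk3
    have := Nat.mul_le_mul_left p hk3
    omega
  interval_cases k
  · omega
  · exact ⟨I, hIs, hJ.map, by omega, hIv⟩
  · obtain ⟨J', hJ'I, hJ'⟩ := exists_subset_sum_eq_zero_card_le_of_card_eq_two_mul hp v
      (by omega) hIv
    exact ⟨J', hJ'I.trans hIs, hJ'⟩

theorem ZMod.exists_sum_eq_zero_card_le [Fintype ι] (v : ι → Fin 2 → ZMod p)
    (h : 3 * p - 2 ≤ Fintype.card ι) :
    ∃ J : Finset ι, J.Nonempty ∧ #J ≤ p ∧ ∑ j ∈ J, v j = 0 := by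
  rcases eq_or_ne p 2 with rfl | hp
  · exact exists_sum_eq_zero_card_le_two v (by simpa using h)
  obtain ⟨s, -, hs⟩ := exists_subset_card_eq (s := univ) h
  obtain ⟨J, -, hJ⟩ := exists_subset_sum_eq_zero_card_le_of_card_eq_three_mul_sub_two hp v hs
  exact ⟨J, hJ⟩

end ZMod

theorem stmt_2 (p s : ℕ) (hp : p.Prime) (hs : 3 * p - 2 ≤ s)
    (a b : Fin s → ℤ) :
    ∃ J : Finset (Fin s), J.Nonempty ∧ J.card ≤ p ∧
      (p : ℤ) ∣ ∑ j ∈ J, a j ∧ (p : ℤ) ∣ ∑ j ∈ J, b j := by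
  have := Fact.mk hp
  obtain ⟨J, hJ, hJp, hsum⟩ :=
    ZMod.exists_sum_eq_zero_card_le (fun j => ![(a j : ZMod p), b j]) (by simpa using hs)
  refine ⟨J, hJ, hJp, ?_, ?_⟩ <;> rw [← ZMod.intCast_zmod_eq_zero_iff_dvd, Int.cast_sum]
  · simpa using congrFun hsum 0
  · simpa using congrFun hsum 1
end

section
/- Let p be a prime and d_1, ..., d_{3p-2} integers none of which is divisible by p. Then there exists a nonempty subset J of {1, ..., 3p-2} with |J| ≤ p such that ∑_{j ∈ J} d_j ≡ 0 (mod p) but ∑_{j ∈ J} d_j ≢ 0 (mod p²). -/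
/-!
Suppose every set of at most `p` terms whose sum is divisible by `p` has sum divisible by `p²`.
Any `p - 1` terms prime to `p` reach every residue by subset sums (Cauchy–Davenport with the sets
`{0, a}`), so two terms with the same residue are congruent mod `p²`, and no residue occurs `p`
times: those `p` terms would sum to `p dᵢ ≢ 0 (mod p²)`. For `p = 2` this already fails.

For `p = 2t + 1`, remove one term `x` and split the other `6t` into two halves of `3t`. No residue
class has more than `2t` members, so each half contains `t` disjoint pairs of distinct residues,
and Cauchy–Davenport with the sets `{0, a, b}` shows that each half reaches every residue `v` by a
set `C v` (resp. `D v`) of at most `t` terms. Now `{x} ∪ C v ∪ D w` and `C (v + dₓ) ∪ D w` with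
`w = -(v + dₓ)` are both admissible, so `dₓ + Σ C v ≡ Σ C (v + dₓ) (mod p²)`; summing over all
`v ∈ ZMod p` gives `p dₓ ≡ 0 (mod p²)`, a contradiction.
-/

open Finset Pointwise

section Pairing

variable {ι α : Type*} [DecidableEq α]

theorem card_filter_add_card_filter_add_card_filter_le (f : ι → α) (s : Finset ι) {x y z : α}
    (hxy : x ≠ y) (hxz : x ≠ z) (hyz : y ≠ z) :
    #{i ∈ s | f i = x} + #{i ∈ s | f i = y} + #{i ∈ s | f i = z} ≤ #s := by
  have := sum_card_fiberwise_eq_card_filter s {x, y, z} f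
  rw [sum_insert (by simp [hxy, hxz]), sum_pair hyz] at this
  have := card_filter_le s fun i => f i ∈ ({x, y, z} : Finset α)
  omega

variable [DecidableEq ι]

/-- The greedy step: `a` is taken from a largest value class and `b` from a largest class among
the others, so that no class can remain too large. -/
theorem exists_pair_forall_card_filter_sdiff_add_le (f : ι → α) {s : Finset ι} {k : ℕ}
    (hs : 2 * (k + 1) ≤ #s) (hcap : ∀ c, #{i ∈ s | f i = c} + (k + 1) ≤ #s) :
    ∃ a ∈ s, ∃ b ∈ s, f a ≠ f b ∧ ∀ c, #{i ∈ s \ {a, b} | f i = c} + k ≤ #(s \ {a, b}) := by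
  set cnt : α → ℕ := fun c => #{i ∈ s | f i = c} with hcnt
  obtain ⟨a, has, ha⟩ := s.exists_max_image (cnt ∘ f) (card_pos.1 (by omega))
  have hrest : {i ∈ s | f i ≠ f a}.Nonempty := by
    have := card_filter_add_card_filter_not (s := s) fun i => f i = f a
    have := hcap (f a)
    exact card_pos.1 (by simp only [ne_eq]; omega)
  obtain ⟨b, hb, hbmax⟩ := exists_max_image _ (cnt ∘ f) hrest
  obtain ⟨hbs, hba⟩ := mem_filter.1 hb
  have hab : a ≠ b := fun h => hba (h ▸ rfl)
  have habs : {a, b} ⊆ s := insert_subset has (singleton_subset_iff.2 hbs)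
  refine ⟨a, has, b, hbs, Ne.symm hba, fun c => ?_⟩
  rw [card_sdiff_of_subset habs, card_pair hab]
  by_cases hc : c = f a ∨ c = f b
  · obtain ⟨e, he, rfl⟩ : ∃ e ∈ ({a, b} : Finset ι), f e = c := by
      rcases hc with rfl | rfl <;> simp
    have hsub : {i ∈ s \ {a, b} | f i = f e} ⊆ {i ∈ s | f i = f e}.erase e := by
      intro i
      simp only [mem_filter, mem_sdiff, mem_erase]
      exact fun ⟨⟨his, hi⟩, hfi⟩ => ⟨fun h => hi (h ▸ he), his, hfi⟩
    have := card_le_card hsub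
    rw [card_erase_of_mem (s := {i ∈ s | f i = f e}) (mem_filter.2 ⟨habs he, rfl⟩)] at this
    have := hcap (f e)
    omega
  rw [not_or] at hc
  have hsub := card_le_card
    (filter_subset_filter (fun i => f i = c) (sdiff_subset : s \ {a, b} ⊆ s))
  obtain hc0 | ⟨i, hi⟩ := ({i ∈ s | f i = c}).eq_empty_or_nonempty
  · rw [hc0, card_empty] at hsub
    omega
  obtain ⟨his, rfl⟩ := mem_filter.1 hi
  have hib := hbmax i (mem_filter.2 ⟨his, hc.1⟩)
  have hbb := ha b hbs
  have := card_filter_add_card_filter_add_card_filter_le f s (Ne.symm hba) (Ne.symm hc.1)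
    (Ne.symm hc.2)
  simp only [Function.comp, hcnt] at hib hbb
  omega

end Pairing

section SubsetSums

variable {ι : Type*} {p : ℕ}

def boundedSubsetSums (f : ι → ZMod p) (s : Finset ι) (k : ℕ) : Finset (ZMod p) :=
  {S ∈ s.powerset | #S ≤ k}.image fun S => ∑ i ∈ S, f i

theorem mem_boundedSubsetSums {f : ι → ZMod p} {s : Finset ι} {k : ℕ} {v : ZMod p} :
    v ∈ boundedSubsetSums f s k ↔ ∃ S ⊆ s, #S ≤ k ∧ ∑ i ∈ S, f i = v := by
  simp [boundedSubsetSums, and_assoc]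

theorem zero_mem_boundedSubsetSums (f : ι → ZMod p) (s : Finset ι) (k : ℕ) :
    0 ∈ boundedSubsetSums f s k :=
  mem_boundedSubsetSums.2 ⟨∅, empty_subset s, by simp, sum_empty⟩

theorem boundedSubsetSums_eq_univ_iff [NeZero p] {f : ι → ZMod p} {s : Finset ι} {k : ℕ} :
    boundedSubsetSums f s k = univ ↔ ∀ v, ∃ S ⊆ s, #S ≤ k ∧ ∑ i ∈ S, f i = v := by
  simp only [eq_univ_iff_forall, mem_boundedSubsetSums]

theorem boundedSubsetSums_eq_univ_of_le_card [NeZero p] {f : ι → ZMod p} {s : Finset ι} {k : ℕ}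
    (h : p ≤ #(boundedSubsetSums f s k)) : boundedSubsetSums f s k = univ :=
  eq_univ_of_card _ (le_antisymm (card_le_univ _) (by rwa [ZMod.card]))

theorem boundedSubsetSums_mono {f : ι → ZMod p} {s t : Finset ι} (h : s ⊆ t) (k : ℕ) :
    boundedSubsetSums f s k ⊆ boundedSubsetSums f t k := fun v hv => by
  obtain ⟨S, hS, hSk, hSv⟩ := mem_boundedSubsetSums.1 hv
  exact mem_boundedSubsetSums.2 ⟨S, hS.trans h, hSk, hSv⟩

variable [DecidableEq ι]

theorem boundedSubsetSums_add_subset (f : ι → ZMod p) {s B : Finset ι} (hB : Disjoint B s)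
    (k : ℕ) :
    boundedSubsetSums f s k + insert 0 (B.image f) ⊆ boundedSubsetSums f (B ∪ s) (k + 1) := by
  intro v hv
  obtain ⟨u, hu, w, hw, rfl⟩ := mem_add.1 hv
  obtain ⟨S, hSs, hSk, rfl⟩ := mem_boundedSubsetSums.1 hu
  rcases mem_insert.1 hw with rfl | hw
  · exact mem_boundedSubsetSums.2 ⟨S, hSs.trans subset_union_right, by omega, (add_zero _).symm⟩
  obtain ⟨b, hb, rfl⟩ := mem_image.1 hw
  have hbS : b ∉ S := fun h => disjoint_left.1 hB hb (hSs h)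
  refine mem_boundedSubsetSums.2
    ⟨insert b S, insert_subset (mem_union_left _ hb) (hSs.trans subset_union_right), ?_, ?_⟩
  · rw [card_insert_of_notMem hbS]
    omega
  · rw [sum_insert hbS, add_comm]

variable [Fact p.Prime]

theorem min_le_card_boundedSubsetSums_union (f : ι → ZMod p) {s B : Finset ι}
    (hB : Disjoint B s) (hinj : Set.InjOn f B) (hf : ∀ b ∈ B, f b ≠ 0) (k : ℕ) :
    min p (#(boundedSubsetSums f s k) + #B) ≤ #(boundedSubsetSums f (B ∪ s) (k + 1)) := by
  have hcard : #(insert 0 (B.image f)) = #B + 1 := by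
    rw [card_insert_of_notMem, card_image_of_injOn hinj]
    simpa [eq_comm] using hf
  have := ZMod.cauchy_davenport Fact.out ⟨0, zero_mem_boundedSubsetSums f s k⟩
    (insert_nonempty 0 (B.image f))
  rw [hcard, ← add_assoc, Nat.add_sub_cancel] at this
  exact this.trans (card_le_card (boundedSubsetSums_add_subset f hB k))

theorem min_le_card_boundedSubsetSums_card (f : ι → ZMod p) {s : Finset ι}
    (hf : ∀ i ∈ s, f i ≠ 0) : min p (#s + 1) ≤ #(boundedSubsetSums f s #s) := by
  induction s using Finset.induction_on with
  | empty => exact (min_le_right _ _).trans (card_pos.2 ⟨0, zero_mem_boundedSubsetSums f ∅ 0⟩)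
  | insert a s ha ih =>
    have step := min_le_card_boundedSubsetSums_union f (disjoint_singleton_left.2 ha)
      (by simp) (by simpa using hf a (mem_insert_self a s)) #s
    have := ih fun i hi => hf i (mem_insert_of_mem hi)
    rw [card_singleton, singleton_union] at step
    rw [card_insert_of_notMem ha]
    omega

theorem boundedSubsetSums_eq_univ_of_card_le {f : ι → ZMod p} {s : Finset ι}
    (hf : ∀ i ∈ s, f i ≠ 0) (hs : p - 1 ≤ #s) : boundedSubsetSums f s (p - 1) = univ := by
  obtain ⟨s', hs', hcard⟩ := exists_subset_card_eq hs
  have := min_le_card_boundedSubsetSums_card f fun i hi => hf i (hs' hi)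
  rw [hcard, Nat.sub_add_cancel (Fact.out : p.Prime).one_le, min_self] at this
  exact eq_univ_of_forall fun v =>
    boundedSubsetSums_mono hs' _ ((boundedSubsetSums_eq_univ_of_le_card this).symm ▸ mem_univ v)

theorem min_le_card_boundedSubsetSums_of_forall_card_filter (f : ι → ZMod p)
    {k : ℕ} {s : Finset ι} (hf : ∀ i ∈ s, f i ≠ 0) (hs : 2 * k ≤ #s)
    (hcap : ∀ c, #{i ∈ s | f i = c} + k ≤ #s) :
    min p (2 * k + 1) ≤ #(boundedSubsetSums f s k) := by
  induction k generalizing s with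
  | zero => exact (min_le_right _ _).trans (card_pos.2 ⟨0, zero_mem_boundedSubsetSums f s 0⟩)
  | succ k ih =>
    obtain ⟨a, ha, b, hb, hab, hcap'⟩ := exists_pair_forall_card_filter_sdiff_add_le f hs hcap
    have habs : {a, b} ⊆ s := insert_subset ha (singleton_subset_iff.2 hb)
    have hne : a ≠ b := fun h => hab (h ▸ rfl)
    have step := min_le_card_boundedSubsetSums_union f (B := {a, b}) (s := s \ {a, b})
      disjoint_sdiff (by simp [hab]) (by simpa using ⟨hf a ha, hf b hb⟩) k
    rw [union_sdiff_of_subset habs, card_pair hne] at step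
    have := ih (fun i hi => hf i (mem_sdiff.1 hi).1)
      (by rw [card_sdiff_of_subset habs, card_pair hne]; omega) hcap'
    omega

theorem boundedSubsetSums_eq_univ_of_forall_card_filter {f : ι → ZMod p} {k : ℕ}
    {s : Finset ι} (hf : ∀ i ∈ s, f i ≠ 0) (hkp : p ≤ 2 * k + 1) (hs : 2 * k ≤ #s)
    (hcap : ∀ c, #{i ∈ s | f i = c} + k ≤ #s) : boundedSubsetSums f s k = univ := by
  have := min_le_card_boundedSubsetSums_of_forall_card_filter f hf hs hcap
  rw [min_eq_left hkp] at this
  exact boundedSubsetSums_eq_univ_of_le_card this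

end SubsetSums

theorem dvd_card_mul_of_forall_dvd_add_sub_add {G R : Type*} [AddGroup G] [Fintype G] [CommRing R]
    {m a : R} (g : G → R) (β : G) (h : ∀ v, m ∣ a + g v - g (v + β)) :
    m ∣ Fintype.card G * a := by
  have hsum : ∑ v, (a + g v - g (v + β)) = Fintype.card G * a := by
    rw [sum_sub_distrib, sum_add_distrib,
      Fintype.sum_equiv (Equiv.addRight β) (fun v => g (v + β)) g fun _ => rfl,
      add_sub_cancel_right, sum_const, card_univ, nsmul_eq_mul]
  exact hsum ▸ dvd_sum fun v _ => h v

theorem intCast_zmod_eq_zero_of_sq_dvd_mul {p : ℕ} [NeZero p] {a : ℤ} (h : (p : ℤ) ^ 2 ∣ p * a) :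
    (a : ZMod p) = 0 := by
  rw [pow_two] at h
  rw [ZMod.intCast_zmod_eq_zero_iff_dvd]
  exact (mul_dvd_mul_iff_left (by exact_mod_cast NeZero.ne p)).1 h

section ShortZeroSums

variable {ι : Type*}

def ShortZeroSumsSqDvd (p : ℕ) (d : ι → ℤ) : Prop :=
  ∀ J : Finset ι, #J ≤ p → ∑ j ∈ J, (d j : ZMod p) = 0 → (p : ℤ) ^ 2 ∣ ∑ j ∈ J, d j

variable [DecidableEq ι] {p : ℕ} {d : ι → ℤ}

namespace ShortZeroSumsSqDvd

theorem sq_dvd_mul [NeZero p] (H : ShortZeroSumsSqDvd p d) {t : ℕ} (hpt : 2 * t + 1 ≤ p) {x : ι}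
    {P Q : Finset ι} (hPQ : Disjoint P Q) (hxP : x ∉ P) (hxQ : x ∉ Q)
    (hP : boundedSubsetSums (fun i => (d i : ZMod p)) P t = univ)
    (hQ : boundedSubsetSums (fun i => (d i : ZMod p)) Q t = univ) :
    (p : ℤ) ^ 2 ∣ p * d x := by
  choose C hCP hCcard hCsum using boundedSubsetSums_eq_univ_iff.1 hP
  choose D hDQ hDcard hDsum using boundedSubsetSums_eq_univ_iff.1 hQ
  have hCD : ∀ u v, Disjoint (C u) (D v) := fun u v => hPQ.mono (hCP u) (hDQ v)
  have hxCD : ∀ u v, x ∉ C u ∪ D v := fun u v h =>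
    (mem_union.1 h).elim (fun h => hxP (hCP u h)) (fun h => hxQ (hDQ v h))
  have hshift : ∀ v, (p : ℤ) ^ 2 ∣ d x + ∑ i ∈ C v, d i - ∑ i ∈ C (v + d x), d i := by
    intro v
    set w := -(v + (d x : ZMod p))
    have hA := H (insert x (C v ∪ D w))
      (by rw [card_insert_of_notMem (hxCD v w), card_union_of_disjoint (hCD v w)]
          have := hCcard v; have := hDcard w; omega)
      (by rw [sum_insert (hxCD v w), sum_union (hCD v w), hCsum, hDsum]; ring)
    have hB := H (C (v + d x) ∪ D w)
      (by rw [card_union_of_disjoint (hCD _ w)]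
          have := hCcard (v + d x); have := hDcard w; omega)
      (by rw [sum_union (hCD _ w), hCsum, hDsum]; ring)
    rw [sum_insert (hxCD v w), sum_union (hCD v w)] at hA
    rw [sum_union (hCD _ w)] at hB
    simpa only [← add_assoc, add_sub_add_right_eq_sub] using dvd_sub hA hB
  have := dvd_card_mul_of_forall_dvd_add_sub_add (fun v => ∑ i ∈ C v, d i) (d x : ZMod p) hshift
  rwa [ZMod.card] at this

variable [Fact p.Prime] [Fintype ι]

theorem sq_dvd_sub (H : ShortZeroSumsSqDvd p d) (hd : ∀ i, (d i : ZMod p) ≠ 0)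
    (hcard : p + 1 ≤ Fintype.card ι) {i j : ι} (hij : (d i : ZMod p) = d j) :
    (p : ℤ) ^ 2 ∣ d i - d j := by
  obtain rfl | hne := eq_or_ne i j
  · simp
  have := (Fact.out : p.Prime).two_le
  have hpool : p - 1 ≤ #(univ \ {i, j}) := by
    rw [card_sdiff_of_subset (subset_univ _), card_univ, card_pair hne]
    omega
  obtain ⟨S, hS, hScard, hSsum⟩ := boundedSubsetSums_eq_univ_iff.1
    (boundedSubsetSums_eq_univ_of_card_le (fun k _ => hd k) hpool) (-(d i : ZMod p))
  have key : ∀ k ∈ ({i, j} : Finset ι), (p : ℤ) ^ 2 ∣ d k + ∑ l ∈ S, d l := by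
    intro k hk
    have hkS : k ∉ S := fun h => (mem_sdiff.1 (hS h)).2 hk
    have hki : (d k : ZMod p) = d i := by
      rcases mem_insert.1 hk with rfl | hk
      · rfl
      rw [mem_singleton.1 hk, hij]
    rw [← sum_insert hkS]
    refine H _ (by rw [card_insert_of_notMem hkS]; omega) ?_
    rw [sum_insert hkS, hSsum, hki, add_neg_cancel]
  simpa using dvd_sub (key i (mem_insert_self i {j})) (key j (by simp))

theorem card_filter_lt (H : ShortZeroSumsSqDvd p d) (hd : ∀ i, (d i : ZMod p) ≠ 0)
    (hcard : p + 1 ≤ Fintype.card ι) (c : ZMod p) : #{i | (d i : ZMod p) = c} < p := by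
  by_contra! hle
  obtain ⟨T, hT, hTcard⟩ := exists_subset_card_eq hle
  obtain ⟨i₀, hi₀⟩ : T.Nonempty := card_pos.1 (hTcard ▸ (Fact.out : p.Prime).pos)
  have hTc : ∀ i ∈ T, (d i : ZMod p) = c := fun i hi => (mem_filter.1 (hT hi)).2
  have hsum : (p : ℤ) ^ 2 ∣ ∑ i ∈ T, d i := H T hTcard.le (by
    rw [sum_congr rfl hTc, sum_const, hTcard, nsmul_eq_mul, ZMod.natCast_self, zero_mul])
  have hdiff : (p : ℤ) ^ 2 ∣ ∑ i ∈ T, (d i - d i₀) := dvd_sum fun i hi =>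
    H.sq_dvd_sub hd hcard ((hTc i hi).trans (hTc i₀ hi₀).symm)
  rw [sum_sub_distrib, sum_const, hTcard, nsmul_eq_mul] at hdiff
  exact hd i₀ (intCast_zmod_eq_zero_of_sq_dvd_mul (by simpa using dvd_sub hsum hdiff))

theorem false_of_odd (H : ShortZeroSumsSqDvd p d) (hd : ∀ i, (d i : ZMod p) ≠ 0) {t : ℕ}
    (hpt : p = 2 * t + 1) (hcard : 6 * t + 1 ≤ Fintype.card ι) : False := by
  have hp : p.Prime := Fact.out
  have hcap := H.card_filter_lt hd (by have := hp.two_le; omega)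
  obtain ⟨x⟩ : Nonempty ι := Fintype.card_pos_iff.1 (by omega)
  have hU : 6 * t ≤ #(univ.erase x) := by
    rw [card_erase_of_mem (mem_univ x), card_univ]
    omega
  obtain ⟨P, hP, hPcard⟩ := exists_subset_card_eq (show 3 * t ≤ #(univ.erase x) by omega)
  obtain ⟨Q, hQ, hQcard⟩ := exists_subset_card_eq
    (show 3 * t ≤ #(univ.erase x \ P) by rw [card_sdiff_of_subset hP]; omega)
  have huniv : ∀ S : Finset ι, #S = 3 * t →
      boundedSubsetSums (fun i => (d i : ZMod p)) S t = univ := fun S hS =>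
    boundedSubsetSums_eq_univ_of_forall_card_filter (fun i _ => hd i) hpt.le (by omega)
      fun c => by
        have := (card_le_card (filter_subset_filter _ (subset_univ S))).trans_lt (hcap c)
        omega
  have := H.sq_dvd_mul hpt.ge (disjoint_of_subset_right hQ disjoint_sdiff)
    (fun h => (mem_erase.1 (hP h)).1 rfl)
    (fun h => (mem_erase.1 (mem_sdiff.1 (hQ h)).1).1 rfl) (huniv P hPcard) (huniv Q hQcard)
  exact hd x (intCast_zmod_eq_zero_of_sq_dvd_mul this)

end ShortZeroSumsSqDvd

end ShortZeroSums

theorem stmt_3 (p : ℕ) (hp : p.Prime) (d : Fin (3 * p - 2) → ℤ)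
    (hd : ∀ j, ¬ (p : ℤ) ∣ d j) :
    ∃ J : Finset (Fin (3 * p - 2)), J.Nonempty ∧ J.card ≤ p ∧
      (p : ℤ) ∣ ∑ j ∈ J, d j ∧ ¬ (p : ℤ) ^ 2 ∣ ∑ j ∈ J, d j := by
  have : Fact p.Prime := ⟨hp⟩
  by_contra! hcon
  have H : ShortZeroSumsSqDvd p d := fun J hJ hsum => by
    obtain rfl | hne := J.eq_empty_or_nonempty
    · simp
    · exact hcon J hne hJ ((ZMod.intCast_zmod_eq_zero_iff_dvd _ p).1 (by push_cast; exact hsum))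
  have hd' : ∀ j, (d j : ZMod p) ≠ 0 := fun j h =>
    hd j ((ZMod.intCast_zmod_eq_zero_iff_dvd _ p).1 h)
  obtain rfl | ⟨t, ht⟩ := hp.eq_two_or_odd'
  · have hodd : ∀ j, (d j : ZMod 2) = 1 := fun j => by
      simpa [ZMod.intCast_eq_one_iff_odd, ← Int.not_even_iff_odd, even_iff_two_dvd] using hd j
    have := H.card_filter_lt hd' (by simp) 1
    rw [filter_true_of_mem fun j _ => hodd j, card_univ, Fintype.card_fin] at this
    omega
  · exact H.false_of_odd hd' ht (by rw [Fintype.card_fin]; omega)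
end

section
/- Let p be a prime, k a positive integer divisible by p - 1, and μ_1 ≠ μ_2 elements of {0, ..., p-1}. Let c_1, ..., c_p be integers coprime to p, and consider vectors v_i = c_i(e_ν + μ_1 e^ν) for 1 ≤ i ≤ p-1 and v_p = c_p(e_ν + μ_2 e^ν) in (ℤ/p²ℤ)², where e_0 = (1,0), e_ν = (ν,1) for 1 ≤ ν ≤ p, e^0 = (0,p), and e^ν = (p,0) for ν ≥ 1. Then there exist integers y_1, ..., y_p with p ∤ y_p such that ∑_{i=1}^p v_i y_i^k ≡ 0 (mod p) and moreover ∑_{i=1}^p v_i y_i^k, divided by p, is a nonzero vector modulo p (i.e., the contraction yields a variable at exactly one level higher). -/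
/-- The vector `e_ν` of the paper: `e_0 = (1,0)` and `e_ν = (ν,1)` for `ν ≥ 1`. -/
def eLow (ν : ℕ) : ℤ × ℤ := if ν = 0 then (1, 0) else ((ν : ℤ), 1)

/-- The vector `e^ν` of the paper: `e^0 = (0,p)` and `e^ν = (p,0)` for `ν ≥ 1`. -/
def eHigh (p ν : ℕ) : ℤ × ℤ := if ν = 0 then (0, (p : ℤ)) else ((p : ℤ), 0)

/-!
By Cauchy–Davenport, the subset sums of the `p - 1` residues `c_1, …, c_{p-1}`, all nonzero,
exhaust `ℤ/p`, so some `T ⊆ {1, …, p-1}` has `A := ∑_{i ∈ T} c_i ≡ -c_p (mod p)`. Let `y` be the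
indicator of `T ∪ {p}`, so that `y_i ^ k = y_i`; with `B := c_p` the sum is then
`(A + B) e_ν + (μ₁ A + μ₂ B) e^ν`. It is `0` mod `p` because `p ∣ A + B` and `e^ν ≡ 0`. Its
determinant against `e_ν` is `± p (μ₁ A + μ₂ B) ≡ ± p (μ₂ - μ₁) B`, which is nonzero mod `p²`,
so the sum is not `0` mod `p²`.
-/

open Finset Pointwise

theorem Finset.image_sum_powerset_insert {ι M : Type*} [DecidableEq ι] [AddCommMonoid M]
    [DecidableEq M] (c : ι → M) {a : ι} {s : Finset ι} (ha : a ∉ s) :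
    (insert a s).powerset.image (fun t ↦ ∑ i ∈ t, c i) =
      s.powerset.image (fun t ↦ ∑ i ∈ t, c i) + {0, c a} := by
  change _ = image₂ (· + ·) _ _
  rw [powerset_insert, image_union, image_image, image₂_insert_right,
    image₂_singleton_right, image_image, image_image]
  simp only [add_zero, Function.comp_def]
  congr 1
  refine image_congr fun t ht ↦ ?_
  rw [sum_insert fun hat ↦ ha (mem_powerset.mp ht hat), add_comm]

namespace ZMod

variable {p : ℕ} [Fact p.Prime] {ι : Type*} [DecidableEq ι]

theorem min_le_card_image_sum_powerset (c : ι → ZMod p) {s : Finset ι}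
    (hc : ∀ i ∈ s, c i ≠ 0) :
    min p (#s + 1) ≤ #(s.powerset.image (fun t ↦ ∑ i ∈ t, c i)) := by
  induction s using Finset.induction_on with
  | empty => simp
  | insert a s ha ih =>
    have hsums := ih fun i hi ↦ hc i (mem_insert_of_mem hi)
    have hpair : #({0, c a} : Finset (ZMod p)) = 2 :=
      card_pair (hc a (mem_insert_self a s)).symm
    have hcd := cauchy_davenport (Fact.out : p.Prime)
      ((powerset_nonempty s).image (fun t ↦ ∑ i ∈ t, c i)) (insert_nonempty 0 {c a})
    rw [image_sum_powerset_insert c ha, card_insert_of_notMem ha]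
    omega

theorem exists_subset_sum_eq (c : ι → ZMod p) {s : Finset ι} (hc : ∀ i ∈ s, c i ≠ 0)
    (hs : p - 1 ≤ #s) (x : ZMod p) : ∃ t ⊆ s, ∑ i ∈ t, c i = x := by
  have hcard := min_le_card_image_sum_powerset c hc
  have huniv : s.powerset.image (fun t ↦ ∑ i ∈ t, c i) = univ := by
    refine eq_univ_of_card _ (le_antisymm (card_le_univ _) ?_)
    rw [ZMod.card]
    omega
  obtain ⟨t, ht, hsum⟩ := mem_image.mp (huniv ▸ mem_univ x)
  exact ⟨t, mem_powerset.mp ht, hsum⟩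

end ZMod

theorem Int.exists_subset_sum_add_dvd {ι : Type*} [DecidableEq ι] {p : ℕ} (hp : p.Prime)
    (c : ι → ℤ) {s : Finset ι} (hc : ∀ i ∈ s, ¬ (p : ℤ) ∣ c i) (hs : p - 1 ≤ #s) (z : ℤ) :
    ∃ t ⊆ s, (p : ℤ) ∣ ∑ i ∈ t, c i + z := by
  have := Fact.mk hp
  obtain ⟨t, hts, ht⟩ := ZMod.exists_subset_sum_eq (fun i ↦ (c i : ZMod p))
    (fun i hi ↦ by simpa [ZMod.intCast_zmod_eq_zero_iff_dvd] using hc i hi) hs (-z)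
  refine ⟨t, hts, ?_⟩
  rw [← ZMod.intCast_zmod_eq_zero_iff_dvd]
  push_cast
  rw [ht, neg_add_cancel]

theorem Prime.not_dvd_mul_add_mul {R : Type*} [CommRing R] {q A B μ₁ μ₂ : R} (hq : Prime q)
    (hμ : ¬ q ∣ μ₂ - μ₁) (hAB : q ∣ A + B) (hB : ¬ q ∣ B) : ¬ q ∣ μ₁ * A + μ₂ * B := by
  intro h
  have hdiff : q ∣ (μ₂ - μ₁) * B := by
    have := dvd_sub h (hAB.mul_left μ₁)
    rwa [show μ₁ * A + μ₂ * B - μ₁ * (A + B) = (μ₂ - μ₁) * B by ring] at this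
  exact (hq.dvd_or_dvd hdiff).elim hμ hB

theorem Int.not_dvd_natCast_sub {p m n : ℕ} (hm : m < p) (hn : n < p) (hmn : m ≠ n) :
    ¬ (p : ℤ) ∣ (n : ℤ) - m := by
  intro h
  have := Int.eq_zero_of_abs_lt_dvd h (abs_sub_lt_iff.mpr ⟨by omega, by omega⟩)
  omega

section Pairs

variable {R : Type*} [CommRing R]

theorem dvd_fst_snd_smul_add_smul {q a b : R} (u : R × R) {w : R × R} (hw : q ∣ w.1 ∧ q ∣ w.2)
    (ha : q ∣ a) : q ∣ (a • u + b • w).1 ∧ q ∣ (a • u + b • w).2 := by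
  simp only [Prod.fst_add, Prod.snd_add, Prod.smul_fst, Prod.smul_snd, smul_eq_mul]
  exact ⟨dvd_add (ha.mul_right _) (hw.1.mul_left _), dvd_add (ha.mul_right _) (hw.2.mul_left _)⟩

/-- Pairing with `u` by the determinant kills `a • u`, so it reads off `b` from `a • u + b • w`. -/
theorem dvd_of_sq_dvd_smul_add_smul [IsDomain R] {q a b : R} {u w : R × R} (hq : q ≠ 0)
    (hdet : u.1 * w.2 - u.2 * w.1 = q ∨ u.1 * w.2 - u.2 * w.1 = -q)
    (h : q ^ 2 ∣ (a • u + b • w).1 ∧ q ^ 2 ∣ (a • u + b • w).2) : q ∣ b := by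
  have hpair : q ^ 2 ∣ u.1 * (a • u + b • w).2 - u.2 * (a • u + b • w).1 :=
    dvd_sub (h.2.mul_left _) (h.1.mul_left _)
  have hdet_pair : u.1 * (a • u + b • w).2 - u.2 * (a • u + b • w).1 =
      b * (u.1 * w.2 - u.2 * w.1) := by
    simp only [Prod.fst_add, Prod.snd_add, Prod.smul_fst, Prod.smul_snd, smul_eq_mul]
    ring
  rw [hdet_pair, sq] at hpair
  rcases hdet with hdet | hdet <;> rw [hdet] at hpair
  · exact (mul_dvd_mul_iff_right hq).mp hpair
  · exact (mul_dvd_mul_iff_right hq).mp (by simpa using hpair)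

end Pairs

theorem Fintype.sum_indicator_pow_smul {ι M : Type*} [Fintype ι] [DecidableEq ι]
    [AddCommGroup M] {k : ℕ} (hk : k ≠ 0) (T : Finset ι) (v : ι → M) :
    ∑ i, ((if i ∈ T then 1 else 0 : ℤ) ^ k) • v i = ∑ i ∈ T, v i := by
  simp only [ite_pow, one_pow, zero_pow hk, ite_smul, one_smul, zero_smul, sum_ite_mem]

theorem dvd_eHigh (p ν : ℕ) : (p : ℤ) ∣ (eHigh p ν).1 ∧ (p : ℤ) ∣ (eHigh p ν).2 := by
  unfold eHigh; split_ifs <;> simp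

theorem eLow_det_eHigh (p ν : ℕ) :
    (eLow ν).1 * (eHigh p ν).2 - (eLow ν).2 * (eHigh p ν).1 = p ∨
      (eLow ν).1 * (eHigh p ν).2 - (eLow ν).2 * (eHigh p ν).1 = -p := by
  unfold eLow eHigh; split_ifs <;> simp

theorem stmt_6 (p k ν μ₁ μ₂ : ℕ) (hp : p.Prime) (hk : 0 < k)
    (hμ₁ : μ₁ ≤ p - 1) (hμ₂ : μ₂ ≤ p - 1)
    (hμ : μ₁ ≠ μ₂) (c : Fin p → ℤ) (hc : ∀ i, ¬ (p : ℤ) ∣ c i)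
    (v : Fin p → ℤ × ℤ)
    (hv : ∀ i : Fin p, v i = if (i : ℕ) < p - 1
        then c i • (eLow ν + (μ₁ : ℤ) • eHigh p ν)
        else c i • (eLow ν + (μ₂ : ℤ) • eHigh p ν)) :
    ∃ y : Fin p → ℤ, ¬ (p : ℤ) ∣ y ⟨p - 1, by have := hp.two_le; omega⟩ ∧
      (p : ℤ) ∣ (∑ i, (y i ^ k) • v i).1 ∧
      (p : ℤ) ∣ (∑ i, (y i ^ k) • v i).2 ∧
      ¬ ((p : ℤ) ^ 2 ∣ (∑ i, (y i ^ k) • v i).1 ∧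
         (p : ℤ) ^ 2 ∣ (∑ i, (y i ^ k) • v i).2) := by
  have hpZ := Nat.prime_iff_prime_int.mp hp
  set last : Fin p := ⟨p - 1, by have := hp.two_le; omega⟩
  obtain ⟨t, hts, hdvd⟩ := Int.exists_subset_sum_add_dvd hp c (s := univ.erase last)
    (fun i _ ↦ hc i) (by simp [card_erase_of_mem]) (c last)
  have hlast : last ∉ t := fun h ↦ notMem_erase last univ (hts h)
  refine ⟨fun i ↦ if i ∈ insert last t then 1 else 0,
    by simpa only [mem_insert_self, if_true] using hpZ.not_dvd_one, ?_⟩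
  have hfirst : ∀ i ∈ t, (i : ℕ) < p - 1 := fun i hi ↦ by
    have : (i : ℕ) ≠ p - 1 := fun h ↦ ne_of_mem_erase (hts hi) (Fin.ext h)
    omega
  have hsum : ∑ i ∈ insert last t, v i = (∑ i ∈ t, c i + c last) • eLow ν +
      ((μ₁ : ℤ) * ∑ i ∈ t, c i + μ₂ * c last) • eHigh p ν := by
    rw [sum_insert hlast, sum_congr rfl fun i hi ↦ (hv i).trans (if_pos (hfirst i hi)),
      ← sum_smul, hv last, if_neg (lt_irrefl _)]
    module
  rw [Fintype.sum_indicator_pow_smul hk.ne', hsum]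
  obtain ⟨h1, h2⟩ := dvd_fst_snd_smul_add_smul (eLow ν) (dvd_eHigh p ν) hdvd
  refine ⟨h1, h2, fun hsq ↦ hpZ.not_dvd_mul_add_mul
    (Int.not_dvd_natCast_sub (by omega) (by omega) hμ) hdvd (hc last)
    (dvd_of_sq_dvd_smul_add_smul (by exact_mod_cast hp.ne_zero) (eLow_det_eHigh p ν) hsq)⟩
end

section
/- Let p be a prime and k a positive integer divisible by p - 1. Suppose we are given integers α_1, ..., α_{p-1} coprime to p and pairs of integers (β_i, γ_i) for p ≤ i ≤ 2p-1 with p ∤ γ_i. Then the system ∑_{i=1}^{p-1} α_i x_i^k ≡ -∑_{i=p}^{2p-1} β_i x_i^k (mod p) together with ∑_{i=p}^{2p-1} γ_i x_i^k ≡ 0 (mod p) has a solution in integers x_1, ..., x_{2p-1} with x_{2p-1} not divisible by p. -/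
/-!
Take every `x_i` and `z_i` in `{0, 1}`, so that `x_i ^ k` and `z_i ^ k` are `0` or `1` and both
congruences become subset-sum problems in `ZMod p`. By Cauchy–Davenport, `p - 1` nonzero residues
(repetitions allowed) have subset sums covering all of `ZMod p`. Applied to the `γ_i` with
`i ≠ 2p-1`, this gives a set `T ∋ 2p-1` with `∑_{i ∈ T} γ_i ≡ 0`; applied to the `α_i`, a set
`S` with `∑_{i ∈ S} α_i ≡ -∑_{i ∈ T} β_i`.
-/

open Finset Pointwise

namespace Finset

variable {ι M : Type*} [DecidableEq M] [AddCommMonoid M]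

def indexedSubsetSum (I : Finset ι) (g : ι → M) : Finset M :=
  I.powerset.image fun S ↦ ∑ i ∈ S, g i

lemma mem_indexedSubsetSum {I : Finset ι} {g : ι → M} {t : M} :
    t ∈ I.indexedSubsetSum g ↔ ∃ S ⊆ I, ∑ i ∈ S, g i = t := by
  simp [indexedSubsetSum]

lemma indexedSubsetSum_insert [DecidableEq ι] {I : Finset ι} {a : ι} (g : ι → M) (ha : a ∉ I) :
    (insert a I).indexedSubsetSum g = {0, g a} + I.indexedSubsetSum g := by
  ext t
  simp only [mem_indexedSubsetSum, mem_add, mem_insert, mem_singleton]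
  constructor
  · rintro ⟨S, hS, rfl⟩
    have hSI : S.erase a ⊆ I := fun i hi ↦
      (mem_insert.1 (hS (mem_of_mem_erase hi))).resolve_left (ne_of_mem_erase hi)
    by_cases haS : a ∈ S
    · exact ⟨g a, .inr rfl, _, ⟨_, hSI, rfl⟩, add_sum_erase S g haS⟩
    · exact ⟨0, .inl rfl, _, ⟨S, erase_eq_of_notMem haS ▸ hSI, rfl⟩, zero_add _⟩
  · rintro ⟨y, rfl | rfl, _, ⟨S, hS, rfl⟩, rfl⟩
    · exact ⟨S, hS.trans (subset_insert a I), (zero_add _).symm⟩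
    · exact ⟨insert a S, insert_subset_insert a hS, sum_insert fun h ↦ ha (hS h)⟩

end Finset

namespace ZMod

variable {ι : Type*} {p : ℕ}

theorem min_card_le_card_indexedSubsetSum (hp : p.Prime) (g : ι → ZMod p) (I : Finset ι)
    (hg : ∀ i ∈ I, g i ≠ 0) : min p (#I + 1) ≤ #(I.indexedSubsetSum g) := by
  classical
  induction I using Finset.induction_on with
  | empty => simp [indexedSubsetSum]
  | @insert a I ha ih =>
    have hpair : #({0, g a} : Finset (ZMod p)) = 2 :=
      card_pair (hg a (mem_insert_self a I)).symm
    have hne : (I.indexedSubsetSum g).Nonempty :=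
      ⟨0, mem_indexedSubsetSum.2 ⟨∅, empty_subset _, sum_empty⟩⟩
    have hcd := cauchy_davenport hp (s := {0, g a}) (insert_nonempty _ _) hne
    have := ih fun i hi ↦ hg i (mem_insert_of_mem hi)
    rw [indexedSubsetSum_insert g ha, card_insert_of_notMem ha]
    omega

theorem exists_subset_sum_eq_s7 (hp : p.Prime) {g : ι → ZMod p} {I : Finset ι}
    (hg : ∀ i ∈ I, g i ≠ 0) (hI : p - 1 ≤ #I) (t : ZMod p) : ∃ S ⊆ I, ∑ i ∈ S, g i = t := by
  have : NeZero p := ⟨hp.ne_zero⟩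
  have := min_card_le_card_indexedSubsetSum hp g I hg
  have huniv : I.indexedSubsetSum g = univ :=
    eq_univ_of_card _ (le_antisymm (card_le_univ _) (by rw [ZMod.card]; omega))
  exact mem_indexedSubsetSum.1 (huniv ▸ mem_univ t)

theorem exists_mem_subset_sum_eq_zero [DecidableEq ι] (hp : p.Prime) {g : ι → ZMod p}
    {I : Finset ι} (hg : ∀ i ∈ I, g i ≠ 0) (hI : p ≤ #I) {a : ι} (ha : a ∈ I) :
    ∃ T ⊆ I, a ∈ T ∧ ∑ i ∈ T, g i = 0 := by
  obtain ⟨S, hS, hsum⟩ := exists_subset_sum_eq_s7 hp (I := I.erase a)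
    (fun i hi ↦ hg i (mem_of_mem_erase hi)) (by rw [card_erase_of_mem ha]; omega) (-g a)
  have haS : a ∉ S := fun h ↦ notMem_erase a I (hS h)
  refine ⟨insert a S, insert_subset ha (hS.trans (erase_subset a I)), mem_insert_self a S, ?_⟩
  rw [sum_insert haS, hsum, add_neg_cancel]

end ZMod

lemma Finset.sum_mul_ite_mem_pow {ι R : Type*} [Fintype ι] [CommSemiring R] (c : ι → R)
    (S : Finset ι) [DecidablePred (· ∈ S)] {k : ℕ} (hk : k ≠ 0) :
    ∑ i, c i * (if i ∈ S then 1 else 0) ^ k = ∑ i ∈ S, c i := by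
  simp [ite_pow, zero_pow hk, mul_ite]

theorem stmt_7 (p k : ℕ) (hp : p.Prime) (hk : 0 < k)
    (α : Fin (p - 1) → ℤ) (hα : ∀ i, ¬ (p : ℤ) ∣ α i)
    (β γ : Fin p → ℤ) (hγ : ∀ i, ¬ (p : ℤ) ∣ γ i) :
    ∃ (x : Fin (p - 1) → ℤ) (z : Fin p → ℤ),
      ¬ (p : ℤ) ∣ z ⟨p - 1, by have := hp.two_le; omega⟩ ∧
      (p : ℤ) ∣ (∑ i, α i * x i ^ k + ∑ i, β i * z i ^ k) ∧
      (p : ℤ) ∣ ∑ i, γ i * z i ^ k := by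
  classical
  have cast_ne_zero {n : ℕ} {c : Fin n → ℤ} (hc : ∀ i, ¬ (p : ℤ) ∣ c i) (i : Fin n)
      (_ : i ∈ univ) : (c i : ZMod p) ≠ 0 :=
    fun h ↦ hc i ((ZMod.intCast_zmod_eq_zero_iff_dvd _ p).1 h)
  obtain ⟨T, -, hlast, hT⟩ := ZMod.exists_mem_subset_sum_eq_zero hp (cast_ne_zero hγ)
    (by simp) (mem_univ ⟨p - 1, by have := hp.two_le; omega⟩)
  obtain ⟨S, -, hS⟩ := ZMod.exists_subset_sum_eq_s7 hp (cast_ne_zero hα) (by simp)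
    (-∑ i ∈ T, (β i : ZMod p))
  refine ⟨fun i ↦ if i ∈ S then 1 else 0, fun i ↦ if i ∈ T then 1 else 0, ?_, ?_, ?_⟩
  · simpa [hlast] using Int.natCast_dvd_natCast.not.2 hp.not_dvd_one
  all_goals
    simp only [sum_mul_ite_mem_pow _ _ hk.ne', ← ZMod.intCast_zmod_eq_zero_iff_dvd]
    push_cast
  · rw [hS, neg_add_cancel]
  · exact hT
end

section
/- Let p be a prime and let d_i ∈ {1, ..., (p-1)/2} and f_i ∈ {0, ..., p-1} and μ_i ∈ {0, ..., p-1} for 1 ≤ i ≤ 4p-3. Then there exists a nonempty subset K of {1, ..., 4p-3} with |K| ≤ 2p such that ∑_{i∈K} d_i ≡ 0 (mod p), ∑_{i∈K} d_i μ_i ≡ 0 (mod p), and ∑_{i∈K} d_i ≢ 0 (mod p²). -/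
open MvPolynomial Finset

lemma key_zero_sum (p : ℕ) [Fact p.Prime] {ι : Type*} [DecidableEq ι] (v w : ι → ZMod p)
    (T : Finset ι) (hT : 2 * (p - 1) < T.card) :
    ∃ K ⊆ T, K.Nonempty ∧ ∑ i ∈ K, v i = 0 ∧ ∑ i ∈ K, w i = 0 := by
  have hp : p.Prime := Fact.out
  have hp1 : 0 < p - 1 := by have := hp.two_le; omega
  classical
  let F : (ι → ZMod p) → MvPolynomial ↥T (ZMod p) :=
    fun u => ∑ i : ↥T, C (u i) * X i ^ (p - 1)
  have hdegF : ∀ u, (F u).totalDegree ≤ p - 1 := by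
    intro u
    refine (totalDegree_finset_sum _ _).trans ?_
    refine Finset.sup_le fun i _ => ?_
    refine (totalDegree_mul _ _).trans ?_
    simp [totalDegree_C, totalDegree_X_pow]
  have hdeg : (F v).totalDegree + (F w).totalDegree < Fintype.card ↥T := by
    have := hdegF v; have := hdegF w
    rw [Fintype.card_coe]
    omega
  have hdvd := char_dvd_card_solutions_of_add_lt p hdeg
  have hz : ∀ u, eval (0 : ↥T → ZMod p) (F u) = 0 := by
    intro u; simp [F, eval_sum, zero_pow hp1.ne']
  have hcard2 : 1 < Fintype.card { x : ↥T → ZMod p // eval x (F v) = 0 ∧ eval x (F w) = 0 } := by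
    rcases hdvd with ⟨k, hk⟩
    have h0 : 0 < Fintype.card { x : ↥T → ZMod p // eval x (F v) = 0 ∧ eval x (F w) = 0 } :=
      Fintype.card_pos_iff.mpr ⟨⟨0, hz v, hz w⟩⟩
    have hk1 : 1 ≤ k := by
      rcases Nat.eq_zero_or_pos k with rfl | h
      · rw [mul_zero] at hk; omega
      · exact h
    calc 1 < p := hp.one_lt
    _ ≤ p * k := Nat.le_mul_of_pos_right p hk1
    _ = _ := hk.symm
  obtain ⟨⟨x, hx1, hx2⟩, hxne⟩ := Fintype.exists_ne_of_one_lt_card hcard2 ⟨0, hz v, hz w⟩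
  have hxne0 : x ≠ 0 := by
    intro h; apply hxne; simp only [Subtype.mk.injEq]; exact h
  have hsum : ∀ u : ι → ZMod p,
      ∑ j ∈ (Finset.univ.filter fun i : ↥T => x i ≠ 0).image Subtype.val, u j = eval x (F u) := by
    intro u
    rw [Finset.sum_image (by intro a _ b _ h; exact Subtype.ext h)]
    have heq : eval x (F u) = ∑ i ∈ Finset.univ.filter (fun i : ↥T => x i ≠ 0),
        u i * x i ^ (p - 1) := by
      simp only [F, eval_sum, eval_mul, eval_pow, eval_C, eval_X]
      exact (Finset.sum_filter_of_ne
        (by intro i _ h hxi; exact h (by simp [hxi, zero_pow hp1.ne']))).symm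
    rw [heq]
    refine Finset.sum_congr rfl fun i hi => ?_
    rw [mem_filter] at hi
    rw [ZMod.pow_card_sub_one_eq_one hi.2, mul_one]
  refine ⟨(Finset.univ.filter fun i : ↥T => x i ≠ 0).image Subtype.val, ?_, ?_, ?_, ?_⟩
  · intro j hj
    simp only [mem_image, mem_filter] at hj
    obtain ⟨i, _, rfl⟩ := hj
    exact i.2
  · obtain ⟨i, hi⟩ := Function.ne_iff.mp hxne0
    refine ⟨i, ?_⟩
    simp only [mem_image, mem_filter]
    exact ⟨i, ⟨mem_univ i, by simpa using hi⟩, rfl⟩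
  · rw [hsum v, hx1]
  · rw [hsum w, hx2]

theorem stmt_8 (p : ℕ) (hp : p.Prime) (hodd : Odd p)
    (d f μ : Fin (4 * p - 3) → ℕ)
    (hd : ∀ i, 1 ≤ d i ∧ d i ≤ (p - 1) / 2)
    (hf : ∀ i, f i ≤ p - 1) (hμ : ∀ i, μ i ≤ p - 1) :
    ∃ K : Finset (Fin (4 * p - 3)), K.Nonempty ∧ K.card ≤ 2 * p ∧
      p ∣ ∑ i ∈ K, d i ∧ p ∣ ∑ i ∈ K, d i * μ i ∧ ¬ p ^ 2 ∣ ∑ i ∈ K, d i := by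
  haveI : Fact p.Prime := ⟨hp⟩
  have hp2 := hp.two_le
  classical
  let v : Fin (4 * p - 3) → ZMod p := fun i => (d i : ZMod p)
  let w : Fin (4 * p - 3) → ZMod p := fun i => ((d i * μ i : ℕ) : ZMod p)
  have hcardu : 2 * (p - 1) < (Finset.univ : Finset (Fin (4 * p - 3))).card := by
    rw [Finset.card_univ, Fintype.card_fin]
    omega
  obtain ⟨K0, _, hK0ne, hK0v, hK0w⟩ := key_zero_sum p v w Finset.univ hcardu
  set S := (Finset.univ : Finset (Fin (4 * p - 3))).powerset.filter
    (fun K => K.Nonempty ∧ ∑ i ∈ K, v i = 0 ∧ ∑ i ∈ K, w i = 0) with hSdef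
  have hS : S.Nonempty := ⟨K0, by
    simp only [hSdef, Finset.mem_filter, Finset.mem_powerset]
    exact ⟨Finset.subset_univ _, hK0ne, hK0v, hK0w⟩⟩
  obtain ⟨K, hKS, hKmin⟩ := S.exists_min_image Finset.card hS
  rw [hSdef, Finset.mem_filter] at hKS
  obtain ⟨-, hKne, hKv, hKw⟩ := hKS
  have hKcard : K.card ≤ 2 * p := by
    by_contra h
    push_neg at h
    obtain ⟨i0, hi0⟩ := hKne
    have herase : 2 * (p - 1) < (K.erase i0).card := by
      rw [Finset.card_erase_of_mem hi0]; omega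
    obtain ⟨K', hK'sub, hK'ne, h1, h2⟩ := key_zero_sum p v w (K.erase i0) herase
    have hlt : K'.card < K.card :=
      lt_of_le_of_lt (Finset.card_le_card hK'sub)
        (by rw [Finset.card_erase_of_mem hi0]; omega)
    have := hKmin K' (by
      rw [hSdef, Finset.mem_filter]
      exact ⟨Finset.mem_powerset.mpr (Finset.subset_univ _), hK'ne, h1, h2⟩)
    omega
  have hdvd1 : p ∣ ∑ i ∈ K, d i := by
    rw [← ZMod.natCast_eq_zero_iff, Nat.cast_sum]
    exact hKv
  have hdvd2 : p ∣ ∑ i ∈ K, d i * μ i := by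
    rw [← ZMod.natCast_eq_zero_iff, Nat.cast_sum]
    exact hKw
  refine ⟨K, hKne, hKcard, hdvd1, hdvd2, ?_⟩
  intro hdvd
  have hlow : 1 ≤ ∑ i ∈ K, d i :=
    le_trans hKne.card_pos (by simpa using Finset.card_nsmul_le_sum K d 1 (fun i _ => (hd i).1))
  have hup : ∑ i ∈ K, d i ≤ K.card * ((p - 1) / 2) :=
    Finset.sum_le_card_nsmul K d _ (fun i _ => (hd i).2)
  obtain ⟨m, hm⟩ := hodd
  have hsmall : ∑ i ∈ K, d i < p ^ 2 := by
    have : K.card * ((p - 1) / 2) ≤ 2 * p * ((p - 1) / 2) :=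
      Nat.mul_le_mul_right _ hKcard
    have h2 : 2 * p * ((p - 1) / 2) = p * (p - 1) := by
      have h3 : (p - 1) / 2 = m := by omega
      have h4 : p - 1 = 2 * m := by omega
      rw [h3, h4]; ring
    have h5 : p * (p - 1) < p ^ 2 := by
      calc p * (p - 1) < p * p :=
            Nat.mul_lt_mul_of_le_of_lt (le_refl p) (by omega) (by omega)
      _ = p ^ 2 := (sq p).symm
    exact lt_of_le_of_lt (hup.trans (this.trans_eq h2)) h5
  exact absurd (Nat.le_of_dvd (by omega) hdvd) (not_le.mpr hsmall)
end

section
/- Let p be a prime, x ≥ 3p - 2 a natural number, and suppose we have x elements of a set S. Then one can choose at least ⌊(x+3)/p⌋ - 3 pairwise disjoint subsets of S, each of size at most p, while leaving at least min(2p - 2, x) elements outside all chosen subsets, provided every subcollection of 3p - 2 elements contains a subset of size at most p with a prescribed property (being a 'contraction'). Formally: if P is a property of subsets of {1, ..., x} such that every subset of {1, ..., x} of size 3p - 2 contains a nonempty subset of size at most p satisfying P, then there exist at least ⌊(x+3)/p⌋ - 3 pairwise disjoint subsets of {1, ..., x} each satisfying P and each of size at most p, whose union omits at least min(2p - 2,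 x) indices. -/
theorem aux_greedy (p x : ℕ) (hp : 2 ≤ p)
    (P : Finset (Fin x) → Prop)
    (hP : ∀ A : Finset (Fin x), A.card = 3 * p - 2 →
      ∃ B ⊆ A, B.Nonempty ∧ B.card ≤ p ∧ P B) :
    ∀ U : Finset (Fin x),
    ∃ S : Finset (Finset (Fin x)),
      (∀ A ∈ S, P A ∧ A.Nonempty ∧ A.card ≤ p ∧ A ⊆ U) ∧
      (S : Set (Finset (Fin x))).PairwiseDisjoint id ∧
      (U.card + 3) / p - 3 ≤ S.card ∧
      min (2 * p - 2) U.card ≤ (U \ S.biUnion id).card := by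
  intro U
  induction U using Finset.strongInductionOn with
  | _ U ih =>
    by_cases h : U.card < 3 * p - 2
    · refine ⟨∅, by simp, by simp, ?_, by simp⟩
      have h3 : (U.card + 3) / p ≤ 3 := by
        calc (U.card + 3) / p ≤ (3 * p) / p := Nat.div_le_div_right (by omega)
        _ = 3 := Nat.mul_div_cancel 3 (by omega)
      omega
    · push_neg at h
      obtain ⟨A, hAU, hA⟩ := Finset.exists_subset_card_eq h
      obtain ⟨B, hBA, hBne, hBcard, hPB⟩ := hP A hA
      have hBU : B ⊆ U := hBA.trans hAU
      have hBUc : 1 ≤ B.card := Finset.card_pos.mpr hBne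
      have hss : U \ B ⊂ U := Finset.sdiff_ssubset hBU hBne
      obtain ⟨S', hS'1, hS'2, hS'3, hS'4⟩ := ih (U \ B) hss
      have hcard : (U \ B).card = U.card - B.card := Finset.card_sdiff_of_subset hBU
      have hdisj : ∀ C ∈ S', Disjoint B C := by
        intro C hC
        refine Finset.disjoint_left.mpr fun b hbB hbC => ?_
        have := (hS'1 C hC).2.2.2 hbC
        rw [Finset.mem_sdiff] at this
        exact this.2 hbB
      have hBnot : B ∉ S' := by
        intro hmem
        obtain ⟨b, hb⟩ := hBne
        exact (Finset.disjoint_left.mp (hdisj B hmem) hb) hb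
      refine ⟨insert B S', ?_, ?_, ?_, ?_⟩
      · intro C hC
        rcases Finset.mem_insert.mp hC with rfl | hC
        · exact ⟨hPB, hBne, hBcard, hBU⟩
        · obtain ⟨h1, h2, h3, h4⟩ := hS'1 C hC
          exact ⟨h1, h2, h3, h4.trans Finset.sdiff_subset⟩
      · rw [Finset.coe_insert]
        exact hS'2.insert fun C hC _ => hdisj C hC
      · rw [Finset.card_insert_of_notMem hBnot]
        have key : (U.card + 3) / p ≤ ((U \ B).card + 3) / p + 1 := by
          have hle : U.card + 3 ≤ (U \ B).card + 3 + p := by omega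
          calc (U.card + 3) / p ≤ ((U \ B).card + 3 + p) / p :=
                Nat.div_le_div_right hle
          _ = ((U \ B).card + 3) / p + 1 := Nat.add_div_right _ (by omega)
        omega
      · have hb : (insert B S').biUnion id = B ∪ S'.biUnion id :=
          Finset.biUnion_insert
        have heq : U \ (B ∪ S'.biUnion id) = (U \ B) \ S'.biUnion id := by
          ext a; simp [Finset.mem_sdiff, not_or]; tauto
        rw [hb, heq]
        omega

theorem stmt_10 (p x : ℕ) (hp : 2 ≤ p) (hx : 3 * p - 2 ≤ x)
    (P : Finset (Fin x) → Prop)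
    (hP : ∀ A : Finset (Fin x), A.card = 3 * p - 2 →
      ∃ B ⊆ A, B.Nonempty ∧ B.card ≤ p ∧ P B) :
    ∃ S : Finset (Finset (Fin x)),
      (∀ A ∈ S, P A ∧ A.Nonempty ∧ A.card ≤ p) ∧
      (S : Set (Finset (Fin x))).PairwiseDisjoint id ∧
      (x + 3) / p - 3 ≤ S.card ∧
      min (2 * p - 2) x ≤ (Finset.univ \ S.biUnion id).card := by
  obtain ⟨S, h1, h2, h3, h4⟩ := aux_greedy p x hp P hP Finset.univ
  have hc : (Finset.univ : Finset (Fin x)).card = x := by simp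
  rw [hc] at h3 h4
  exact ⟨S, fun A hA => ⟨(h1 A hA).1, (h1 A hA).2.1, (h1 A hA).2.2.1⟩, h2, h3, h4⟩
end

section
/- Let p be a prime, τ ≥ 1, and set γ = τ + 1 (for p odd). Suppose a pair of additive forms f = ∑ a_i x_i^k, g = ∑ b_i x_i^k of degree k = p^τ(p-1) admits, for each of two distinct colours ν₁ ≠ ν₂ in {0, ..., p}, a subset K_ν of variables at level 0 of colour ν and integers y_j coprime to p (j ∈ K_ν) with ∑_{j∈K_ν} a_j y_j^k ≡ ∑_{j∈K_ν} b_j y_j^k ≡ 0 (mod p^γ). Then the congruences ∑ a_i x_i^k ≡ ∑ b_i x_i^k ≡ 0 (mod p^γ) have a solution for which the 2×s matrix with rows (a_1 x_1, ..., a_s x_s) and (b_1 x_1, ..., b_s x_s) has rank 2 modulo p. -/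
/-- `(a, b)` is, modulo `p`, a nonzero multiple of `e_ν`, i.e. it lies on the
line `L_ν` (the variable is at level 0 and of colour `ν`). -/
def OfColour (p ν : ℕ) (a b : ℤ) : Prop :=
  ∃ c : ℤ, ¬ (p : ℤ) ∣ c ∧
    (p : ℤ) ∣ a - c * (eLow ν).1 ∧ (p : ℤ) ∣ b - c * (eLow ν).2

theorem stmt_12 (p τ s ν₁ ν₂ : ℕ) (hp : p.Prime) (hodd : Odd p) (hτ : 1 ≤ τ)
    (hν₁ : ν₁ ≤ p) (hν₂ : ν₂ ≤ p) (hne : ν₁ ≠ ν₂)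
    (a b : Fin s → ℤ)
    (K₁ K₂ : Finset (Fin s)) (hK₁ : K₁.Nonempty) (hK₂ : K₂.Nonempty)
    (hcol₁ : ∀ j ∈ K₁, OfColour p ν₁ (a j) (b j))
    (hcol₂ : ∀ j ∈ K₂, OfColour p ν₂ (a j) (b j))
    (y₁ y₂ : Fin s → ℤ)
    (hy₁ : ∀ j ∈ K₁, ¬ (p : ℤ) ∣ y₁ j) (hy₂ : ∀ j ∈ K₂, ¬ (p : ℤ) ∣ y₂ j)
    (hsum₁a : (p : ℤ) ^ (τ + 1) ∣ ∑ j ∈ K₁, a j * y₁ j ^ (p ^ τ * (p - 1)))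
    (hsum₁b : (p : ℤ) ^ (τ + 1) ∣ ∑ j ∈ K₁, b j * y₁ j ^ (p ^ τ * (p - 1)))
    (hsum₂a : (p : ℤ) ^ (τ + 1) ∣ ∑ j ∈ K₂, a j * y₂ j ^ (p ^ τ * (p - 1)))
    (hsum₂b : (p : ℤ) ^ (τ + 1) ∣ ∑ j ∈ K₂, b j * y₂ j ^ (p ^ τ * (p - 1))) :
    ∃ x : Fin s → ℤ,
      (p : ℤ) ^ (τ + 1) ∣ ∑ i, a i * x i ^ (p ^ τ * (p - 1)) ∧
      (p : ℤ) ^ (τ + 1) ∣ ∑ i, b i * x i ^ (p ^ τ * (p - 1)) ∧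
      ∃ i j, ¬ (p : ℤ) ∣ (a i * x i) * (b j * x j) - (a j * x j) * (b i * x i) := by
  haveI : Fact p.Prime := ⟨hp⟩
  have hp2 := hp.two_le
  set k := p ^ τ * (p - 1) with hkdef
  have hk : k ≠ 0 :=
    Nat.mul_ne_zero (pow_ne_zero _ hp.pos.ne') (Nat.sub_ne_zero_of_lt hp.one_lt)
  -- translate colour data to `ZMod p`
  have key : ∀ ν (A B : ℤ), OfColour p ν A B → ∃ c : ZMod p, c ≠ 0 ∧
      (A : ZMod p) = c * ((eLow ν).1 : ZMod p) ∧
      (B : ZMod p) = c * ((eLow ν).2 : ZMod p) := by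
    intro ν A B ⟨c, hc, h1, h2⟩
    refine ⟨(c : ZMod p), ?_, ?_, ?_⟩
    · rw [Ne, ZMod.intCast_zmod_eq_zero_iff_dvd]; exact hc
    · have := (ZMod.intCast_zmod_eq_zero_iff_dvd _ p).mpr h1
      push_cast at this ⊢; linear_combination this
    · have := (ZMod.intCast_zmod_eq_zero_iff_dvd _ p).mpr h2
      push_cast at this ⊢; linear_combination this
  -- the determinant of the two direction vectors is nonzero mod p
  have hdet : ((eLow ν₁).1 : ZMod p) * ((eLow ν₂).2 : ZMod p)
      - ((eLow ν₂).1 : ZMod p) * ((eLow ν₁).2 : ZMod p) ≠ 0 := by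
    unfold eLow
    by_cases h1 : ν₁ = 0 <;> by_cases h2 : ν₂ = 0 <;>
      simp only [h1, h2, if_pos, if_neg, if_true, if_false] <;> push_cast
    · exact absurd (h1.trans h2.symm) hne
    · simpa using one_ne_zero
    · simpa using neg_ne_zero.mpr (one_ne_zero)
    · simp only [mul_one]
      intro h
      have h' : (ν₁ : ZMod p) = (ν₂ : ZMod p) := by
        have := sub_eq_zero.mp h
        exact_mod_cast this
      have hmod := (ZMod.natCast_eq_natCast_iff _ _ _).mp h'
      have hdvd : (p : ℤ) ∣ (ν₂ : ℤ) - (ν₁ : ℤ) := (Nat.modEq_iff_dvd).mp hmod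
      have hz : (ν₂ : ℤ) - (ν₁ : ℤ) = 0 :=
        Int.eq_zero_of_abs_lt_dvd hdvd (abs_lt.mpr (by constructor <;> omega))
      omega
  -- K₁ and K₂ are disjoint
  have hdisj : Disjoint K₁ K₂ := by
    rw [Finset.disjoint_left]
    intro t ht1 ht2
    obtain ⟨c₁, hc₁, ha₁, hb₁⟩ := key _ _ _ (hcol₁ t ht1)
    obtain ⟨c₂, hc₂, ha₂, hb₂⟩ := key _ _ _ (hcol₂ t ht2)
    apply hdet
    have : c₁ * (((eLow ν₁).1 : ZMod p) * ((eLow ν₂).2 : ZMod p)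
        - ((eLow ν₂).1 : ZMod p) * ((eLow ν₁).2 : ZMod p)) = 0 := by
      linear_combination ((eLow ν₂).2 : ZMod p) * ha₁.symm
        - ((eLow ν₂).2 : ZMod p) * ha₂.symm
        + ((eLow ν₂).1 : ZMod p) * hb₂.symm - ((eLow ν₂).1 : ZMod p) * hb₁.symm
        + c₂ * (((eLow ν₂).1 : ZMod p) * ((eLow ν₂).2 : ZMod p)
          - ((eLow ν₂).1 : ZMod p) * ((eLow ν₂).2 : ZMod p) - 0)
    exact (mul_eq_zero.mp this).resolve_left hc₁
  -- the solution
  set x : Fin s → ℤ := fun i => if i ∈ K₁ then y₁ i else if i ∈ K₂ then y₂ i else 0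
    with hx
  have hx1 : ∀ i ∈ K₁, x i = y₁ i := by intro i hi; simp [hx, hi]
  have hx2 : ∀ i ∈ K₂, x i = y₂ i := by
    intro i hi
    have : i ∉ K₁ := fun h => (Finset.disjoint_left.mp hdisj h) hi
    simp [hx, hi, this]
  have hsplit : ∀ w : Fin s → ℤ, ∑ i, w i * x i ^ k
      = ∑ i ∈ K₁, w i * y₁ i ^ k + ∑ i ∈ K₂, w i * y₂ i ^ k := by
    intro w
    have e1 : ∑ i ∈ K₁, w i * y₁ i ^ k = ∑ i ∈ K₁, w i * x i ^ k :=
      Finset.sum_congr rfl fun i hi => by rw [hx1 i hi]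
    have e2 : ∑ i ∈ K₂, w i * y₂ i ^ k = ∑ i ∈ K₂, w i * x i ^ k :=
      Finset.sum_congr rfl fun i hi => by rw [hx2 i hi]
    rw [e1, e2, ← Finset.sum_union hdisj]
    refine (Finset.sum_subset (Finset.subset_univ _) fun i _ hi => ?_).symm
    have : x i = 0 := by
      simp only [hx]
      rw [if_neg, if_neg] <;> intro h <;> exact hi (Finset.mem_union.mpr (by tauto))
    rw [this, zero_pow hk, mul_zero]
  obtain ⟨i, hi⟩ := hK₁
  obtain ⟨j, hj⟩ := hK₂
  refine ⟨x, ?_, ?_, i, j, ?_⟩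
  · rw [hsplit]; exact dvd_add hsum₁a hsum₂a
  · rw [hsplit]; exact dvd_add hsum₁b hsum₂b
  · obtain ⟨c₁, hc₁, ha₁, hb₁⟩ := key _ _ _ (hcol₁ i hi)
    obtain ⟨c₂, hc₂, ha₂, hb₂⟩ := key _ _ _ (hcol₂ j hj)
    have hyi : ((y₁ i : ℤ) : ZMod p) ≠ 0 := by
      rw [Ne, ZMod.intCast_zmod_eq_zero_iff_dvd]; exact hy₁ i hi
    have hyj : ((y₂ j : ℤ) : ZMod p) ≠ 0 := by
      rw [Ne, ZMod.intCast_zmod_eq_zero_iff_dvd]; exact hy₂ j hj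
    rw [← ZMod.intCast_zmod_eq_zero_iff_dvd]
    push_cast
    rw [hx1 i hi, hx2 j hj]
    push_cast
    rw [ha₁, hb₁, ha₂, hb₂]
    intro h
    apply mul_ne_zero (mul_ne_zero (mul_ne_zero hc₁ hc₂) (mul_ne_zero hyi hyj)) hdet
    linear_combination h
end

section
/- Let p be an odd prime and γ ≥ 1. Let (a_i, b_i), for i in a finite index set I with |I| ≥ p^γ + p^{γ-1} - 1, be pairs of integers, all lying (mod p) on the same line L_ν = {c·e_ν : c ∈ (ℤ/pℤ)*} with no pair ≡ (0,0) mod p. Then there exists a nonempty subset K ⊆ I such that ∑_{i∈K} a_i ≡ ∑_{i∈K} b_i ≡ 0 (mod p^γ). -/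
open Finset AddMonoidAlgebra

lemma prod_eq_zero_of_forall_mem_span_pair {R ι : Type*} [CommRing R] [Fintype ι] {u v : R}
    {a b : ℕ} (hu : u ^ a = 0) (hv : v ^ b = 0) (hcard : a + b - 1 ≤ Fintype.card ι)
    (f : ι → R) (hf : ∀ i, f i ∈ Ideal.span {u, v}) : ∏ i, f i = 0 := by
  classical
  choose c d hcd using fun i ↦ Ideal.mem_span_pair.mp (hf i)
  simp_rw [← hcd, prod_add, prod_mul_distrib, prod_const]
  refine sum_eq_zero fun t _ ↦ ?_
  have : a ≤ #t ∨ b ≤ #(univ \ t) := by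
    rw [← compl_eq_univ_sdiff, card_compl]
    have := t.card_le_univ
    omega
  rcases this with h | h
  · rw [pow_eq_zero_of_le h hu]; ring
  · rw [pow_eq_zero_of_le h hv]; ring

section GroupAlgebra
variable {k G : Type*} [CommRing k] [AddCommMonoid G]

lemma single_sub_one_pow_char_pow_eq_zero {p : ℕ} [Fact p.Prime] [CharP k p]
    {g : G} {m : ℕ} (hg : p ^ m • g = 0) : (single g (1 : k) - 1) ^ p ^ m = 0 := by
  have : CharP k[G] p := charP_of_injective_algebraMap' k p
  rw [sub_pow_char_pow, single_pow, one_pow, hg, one_pow, ← one_def, sub_self]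

lemma single_sub_one_mem_of_mem_closure (I : Ideal k[G]) {S : Set G}
    (hS : ∀ g ∈ S, single g (1 : k) - 1 ∈ I) {g : G} (hg : g ∈ AddSubmonoid.closure S) :
    single g (1 : k) - 1 ∈ I := by
  induction hg using AddSubmonoid.closure_induction with
  | mem g hg => exact hS g hg
  | zero => simp [← one_def]
  | add x y _ _ hx hy =>
    have : single (x + y) (1 : k) - 1 = single x 1 * (single y 1 - 1) + (single x 1 - 1) := by
      rw [mul_sub, single_mul_single, one_mul, mul_one]; ring
    rw [this]
    exact I.add_mem (I.mul_mem_left _ hy) hx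

variable {ι : Type*} [Fintype ι]

lemma coeff_prod_single_sub_one_zero [DecidableEq ι] [DecidableEq G] (g : ι → G) :
    (∏ i, (single (g i) (1 : k) - 1)).coeff 0 =
      ∑ t with ∑ i ∈ t, g i = 0, (-1) ^ #tᶜ := by
  have hsplit : ∀ i, single (g i) (1 : k) - 1 = single (g i) 1 + single 0 (-1) := by
    intro i; rw [single_neg, one_def, sub_eq_add_neg]
  simp_rw [hsplit, prod_add, prod_single, prod_const_one, sum_const_zero, single_mul_single,
    add_zero, one_mul, coeff_sum, Finsupp.finsetSum_apply, coeff_single, Finsupp.single_apply,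
    sum_filter, powerset_univ, compl_eq_univ_sdiff, prod_const]

lemma exists_nonempty_sum_eq_zero_of_prod_single_sub_one_eq_zero [Nontrivial k] (g : ι → G)
    (h : ∏ i, (single (g i) (1 : k) - 1) = 0) : ∃ K : Finset ι, K.Nonempty ∧ ∑ i ∈ K, g i = 0 := by
  classical
  by_contra! hg
  have hfilter : ({t | ∑ i ∈ t, g i = 0} : Finset (Finset ι)) = {∅} := by
    ext t
    simp only [mem_filter, mem_univ, true_and, mem_singleton]
    exact ⟨fun ht ↦ not_nonempty_iff_eq_empty.mp fun hne ↦ hg t hne ht, by rintro rfl; simp⟩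
  have := coeff_prod_single_sub_one_zero (k := k) g
  rw [h, hfilter, sum_singleton] at this
  exact neg_one_pow_ne_zero _ this.symm

end GroupAlgebra

theorem exists_nonempty_sum_eq_zero_of_card_zmod_prime_pow_prod {ι : Type*} [Fintype ι]
    {p : ℕ} [hp : Fact p.Prime] {α β : ℕ} (hcard : p ^ α + p ^ β - 1 ≤ Fintype.card ι)
    (g : ι → ZMod (p ^ α) × ZMod (p ^ β)) :
    ∃ K : Finset ι, K.Nonempty ∧ ∑ i ∈ K, g i = 0 := by
  have : NeZero (p ^ α) := ⟨pow_ne_zero _ hp.out.ne_zero⟩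
  have : NeZero (p ^ β) := ⟨pow_ne_zero _ hp.out.ne_zero⟩
  let e₁ : ZMod (p ^ α) × ZMod (p ^ β) := (1, 0)
  let e₂ : ZMod (p ^ α) × ZMod (p ^ β) := (0, 1)
  let I : Ideal (ZMod p)[ZMod (p ^ α) × ZMod (p ^ β)] :=
    Ideal.span {single e₁ 1 - 1, single e₂ 1 - 1}
  have hgen : ∀ x, x ∈ AddSubmonoid.closure {e₁, e₂} := by
    rintro ⟨u, v⟩
    have : (u, v) = u.val • e₁ + v.val • e₂ := by simp [e₁, e₂]
    rw [this]
    exact add_mem (nsmul_mem (AddSubmonoid.subset_closure (by simp)) _)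
      (nsmul_mem (AddSubmonoid.subset_closure (by simp)) _)
  refine exists_nonempty_sum_eq_zero_of_prod_single_sub_one_eq_zero (k := ZMod p) g ?_
  refine prod_eq_zero_of_forall_mem_span_pair (single_sub_one_pow_char_pow_eq_zero ?_)
    (single_sub_one_pow_char_pow_eq_zero ?_) hcard _ fun i ↦
      single_sub_one_mem_of_mem_closure I ?_ (hgen (g i))
  · simp [e₁]
  · simp [e₂]
  · rintro x (rfl | rfl)
    · exact Ideal.subset_span (by simp)
    · exact Ideal.subset_span (by simp)

theorem exists_nonempty_dvd_sum_and_dvd_sum {ι : Type*} [Fintype ι] {p : ℕ} (hp : p.Prime)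
    {α β : ℕ} (hcard : p ^ α + p ^ β - 1 ≤ Fintype.card ι) (x y : ι → ℤ) :
    ∃ K : Finset ι, K.Nonempty ∧ (p : ℤ) ^ α ∣ ∑ i ∈ K, x i ∧ (p : ℤ) ^ β ∣ ∑ i ∈ K, y i := by
  have : Fact p.Prime := ⟨hp⟩
  obtain ⟨K, hK, hsum⟩ := exists_nonempty_sum_eq_zero_of_card_zmod_prime_pow_prod hcard
    fun i ↦ ((x i : ZMod (p ^ α)), (y i : ZMod (p ^ β)))
  refine ⟨K, hK, ?_, ?_⟩
  · have := congrArg Prod.fst hsum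
    rw [Prod.fst_sum] at this
    exact_mod_cast (ZMod.intCast_zmod_eq_zero_iff_dvd _ _).mp (by push_cast; exact this)
  · have := congrArg Prod.snd hsum
    rw [Prod.snd_sum] at this
    exact_mod_cast (ZMod.intCast_zmod_eq_zero_iff_dvd _ _).mp (by push_cast; exact this)

lemma exists_nonempty_dvd_sum_of_forall_dvd {ι : Type*} [Fintype ι] {p γ : ℕ} (hp : p.Prime)
    (hγ : 1 ≤ γ) (hcard : p ^ γ + p ^ (γ - 1) - 1 ≤ Fintype.card ι) (x y : ι → ℤ)
    (hy : ∀ i, (p : ℤ) ∣ y i) :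
    ∃ K : Finset ι, K.Nonempty ∧ (p : ℤ) ^ γ ∣ ∑ i ∈ K, x i ∧ (p : ℤ) ^ γ ∣ ∑ i ∈ K, y i := by
  choose d hd using hy
  obtain ⟨K, hK, hx, hdK⟩ := exists_nonempty_dvd_sum_and_dvd_sum hp hcard x d
  refine ⟨K, hK, hx, ?_⟩
  rw [sum_congr rfl fun i _ ↦ hd i, ← mul_sum, ← Nat.sub_add_cancel hγ, pow_succ']
  exact mul_dvd_mul_left _ hdK

lemma OfColour.dvd_snd {p : ℕ} {a b : ℤ} (h : OfColour p 0 a b) : (p : ℤ) ∣ b := by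
  obtain ⟨c, -, -, hb⟩ := h
  simpa [eLow] using hb

lemma OfColour.dvd_sub_mul {p ν : ℕ} {a b : ℤ} (hν : ν ≠ 0) (h : OfColour p ν a b) :
    (p : ℤ) ∣ a - ν * b := by
  obtain ⟨c, -, ha, hb⟩ := h
  simp only [eLow, if_neg hν, mul_one] at ha hb
  have : a - ν * b = (a - c * ν) - ν * (b - c) := by ring
  rw [this]
  exact dvd_sub ha (hb.mul_left _)

theorem stmt_13_general (p γ n ν : ℕ) (hp : p.Prime) (hγ : 1 ≤ γ)
    (hn : p ^ γ + p ^ (γ - 1) - 1 ≤ n)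
    (a b : Fin n → ℤ) (hcol : ∀ i, OfColour p ν (a i) (b i)) :
    ∃ K : Finset (Fin n), K.Nonempty ∧
      (p : ℤ) ^ γ ∣ ∑ i ∈ K, a i ∧ (p : ℤ) ^ γ ∣ ∑ i ∈ K, b i := by
  rw [← Fintype.card_fin n] at hn
  rcases eq_or_ne ν 0 with rfl | hν
  · exact exists_nonempty_dvd_sum_of_forall_dvd hp hγ hn a b fun i ↦ (hcol i).dvd_snd
  · obtain ⟨K, hK, hb, had⟩ := exists_nonempty_dvd_sum_of_forall_dvd hp hγ hn b
      (fun i ↦ a i - ν * b i) fun i ↦ (hcol i).dvd_sub_mul hν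
    refine ⟨K, hK, ?_, hb⟩
    have : ∑ i ∈ K, a i = ν * ∑ i ∈ K, b i + ∑ i ∈ K, (a i - ν * b i) := by
      rw [mul_sum, ← sum_add_distrib]; simp
    rw [this]
    exact dvd_add (hb.mul_left _) had

theorem stmt_13 (p γ n ν : ℕ) (hp : p.Prime) (hodd : Odd p) (hγ : 1 ≤ γ)
    (hν : ν ≤ p) (hn : p ^ γ + p ^ (γ - 1) - 1 ≤ n)
    (a b : Fin n → ℤ) (hcol : ∀ i, OfColour p ν (a i) (b i)) :
    ∃ K : Finset (Fin n), K.Nonempty ∧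
      (p : ℤ) ^ γ ∣ ∑ i ∈ K, a i ∧ (p : ℤ) ^ γ ∣ ∑ i ∈ K, b i :=
  stmt_13_general p γ n ν hp hγ hn a b hcol
end

section
/- Let p be a prime, l ≥ 0, and suppose we have integers x ≥ 0, and a collection of at least px + p² - 3p + 3 pairs of integers (a_i, b_i), all of whose reductions mod p² lie in the union over μ of the classes L_{νμ} for one fixed ν (i.e., all are of colour ν at their level), such that at least x of them have colour nuance (ν, μ₀) for some fixed μ₀, and at least x have a colour nuance (ν, μ) with μ ≠ μ₀. If for any p-1 pairs of one nuance and one pair of a different nuance there is a contraction to a vector divisible by p but with (1/p)·(sum) nonzero mod p (as guaranteed by Lemma 18 with weights y_i^k, (p-1) | k), then one can select x pairwise disjoint subsets, each of size p, each consisting of p-1 pairs of a common nuance together with one pair of a different nuance. -/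
/-!
Choose the sets greedily. Write `a` and `b` for the numbers of pairs of nuance `μ₀` and of other
nuances, so that `a + b ≥ p(m + 1) + (p - 1)(p - 2) + 1` when `m + 1` sets are still to be
chosen. If `a ≥ m + p - 1`, take `p - 1` pairs of nuance `μ₀` and one other pair. Otherwise
`b > (p - 1)(m + p - 2)`, and since there are at most `p - 1` nuances other than `μ₀`, one of
them, `η`, occurs at least `m + p - 1` times; take `p - 1` pairs of nuance `η` and one of
nuance `μ₀`. In both cases the remaining pairs satisfy the same hypotheses with `m` in place
of `m + 1`.
-/

section Selection

open Finset Function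

variable {ι κ : Type*} [DecidableEq κ]

theorem pairwise_disjoint_fin_cons {x : ℕ} {T : Finset ι} {S : Fin x → Finset ι}
    (hT : ∀ i, Disjoint T (S i)) (hS : Pairwise (Disjoint on S)) :
    Pairwise (Disjoint on (Fin.cons T S : Fin (x + 1) → Finset ι)) := by
  intro i j hij
  induction i using Fin.cases <;> induction j using Fin.cases
  · exact absurd rfl hij
  · simpa [onFun] using hT _
  · simpa [onFun] using (hT _).symm
  · simpa [onFun] using hS (fun h => hij (congrArg Fin.succ h))

theorem exists_pairwise_disjoint_of_step [DecidableEq ι] {P : ℕ → Finset ι → Prop}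
    {Q : Finset ι → Prop}
    (step : ∀ m A, P (m + 1) A → ∃ T ⊆ A, Q T ∧ P m (A \ T)) :
    ∀ x A, P x A → ∃ S : Fin x → Finset ι,
      (∀ i, S i ⊆ A) ∧ Pairwise (Disjoint on S) ∧ ∀ i, Q (S i) := by
  intro x
  induction x with
  | zero => exact fun _ _ => ⟨Fin.elim0, fun i => i.elim0, fun i => i.elim0, fun i => i.elim0⟩
  | succ m ih =>
    intro A hA
    obtain ⟨T, hTA, hQT, hrest⟩ := step m A hA
    obtain ⟨S, hSA, hSdisj, hQS⟩ := ih (A \ T) hrest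
    refine ⟨Fin.cons T S, Fin.cases hTA fun i => (hSA i).trans sdiff_subset,
      pairwise_disjoint_fin_cons (fun i => ?_) hSdisj, Fin.cases hQT hQS⟩
    exact disjoint_of_subset_right (hSA i) disjoint_sdiff

namespace Finset

theorem card_filter_sdiff [DecidableEq ι] {A T : Finset ι} (h : T ⊆ A) (q : ι → Prop)
    [DecidablePred q] :
    #{i ∈ A \ T | q i} = #{i ∈ A | q i} - #{i ∈ T | q i} := by
  have hfilter : {i ∈ A \ T | q i} = {i ∈ A | q i} \ {i ∈ T | q i} := by
    ext i
    simp only [mem_filter, mem_sdiff]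
    tauto
  rw [hfilter, card_sdiff_of_subset (filter_subset_filter q h)]

theorem card_filter_eq_le_card_filter_ne (μ : ι → κ) (A : Finset ι) {η μ₀ : κ} (h : η ≠ μ₀) :
    #{i ∈ A | μ i = η} ≤ #{i ∈ A | μ i ≠ μ₀} :=
  card_le_card (monotone_filter_right A fun _ _ hi => hi ▸ h)

theorem exists_lt_card_filter_eq_of_mul_lt {p : ℕ} {μ : ι → κ} {C : Finset κ}
    (hμ : ∀ i, μ i ∈ C) (hC : #C ≤ p) {μ₀ : κ} (hμ₀ : μ₀ ∈ C) {A : Finset ι} {k : ℕ}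
    (hb : (p - 1) * k < #{i ∈ A | μ i ≠ μ₀}) :
    ∃ η ≠ μ₀, k < #{i ∈ A | μ i = η} := by
  have hothers : #(C.erase μ₀) * k < #{i ∈ A | μ i ≠ μ₀} := by
    refine lt_of_le_of_lt (Nat.mul_le_mul_right k ?_) hb
    rw [card_erase_of_mem hμ₀]
    omega
  obtain ⟨η, hηC, hη⟩ := exists_lt_card_fiber_of_mul_lt_card_of_maps_to
    (fun i hi => mem_erase.2 ⟨(mem_filter.1 hi).2, hμ i⟩) hothers
  exact ⟨η, ne_of_mem_erase hηC,
    hη.trans_le (card_le_card (filter_subset_filter _ (filter_subset _ _)))⟩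

end Finset

theorem exists_mixed_subset [DecidableEq ι] {p : ℕ} (hp : 1 ≤ p) {μ : ι → κ} {A : Finset ι}
    {η : κ} {e : ι}
    (hη : p - 1 ≤ #{i ∈ A | μ i = η}) (he : e ∈ A) (heη : μ e ≠ η) :
    ∃ T ⊆ A, e ∈ T ∧ #T = p ∧ #{i ∈ T | μ i = η} = p - 1 := by
  obtain ⟨P, hPA, hPcard⟩ := exists_subset_card_eq hη
  have hPη : ∀ i ∈ P, μ i = η := fun i hi => (mem_filter.1 (hPA hi)).2
  have heP : e ∉ P := fun h => heη (hPη e h)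
  refine ⟨insert e P, insert_subset he (hPA.trans (filter_subset _ _)), mem_insert_self e P,
    by rw [card_insert_of_notMem heP, hPcard]; omega, ?_⟩
  rw [filter_insert, if_neg heη, filter_true_of_mem hPη, hPcard]

def IsMixed (μ : ι → κ) (p : ℕ) (T : Finset ι) : Prop :=
  #T = p ∧ ∃ η, #{j ∈ T | μ j = η} = p - 1 ∧ ∃ j ∈ T, μ j ≠ η

/-- `(p - 1) * (p - 2) + 1` is `p ^ 2 - 3 * p + 3` without truncated subtraction. -/
def Ample (p : ℕ) (μ : ι → κ) (μ₀ : κ) (x : ℕ) (A : Finset ι) : Prop :=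
  p * x + (p - 1) * (p - 2) + 1 ≤ #A ∧ x ≤ #{i ∈ A | μ i = μ₀} ∧ x ≤ #{i ∈ A | μ i ≠ μ₀}

theorem Ample.sdiff [DecidableEq ι] {p m : ℕ} {μ : ι → κ} {μ₀ : κ} {A T : Finset ι}
    (h : Ample p μ μ₀ (m + 1) A) (hTA : T ⊆ A) (hT : #T = p)
    (h₀ : m + #{i ∈ T | μ i = μ₀} ≤ #{i ∈ A | μ i = μ₀})
    (h₁ : m + #{i ∈ T | μ i ≠ μ₀} ≤ #{i ∈ A | μ i ≠ μ₀}) :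
    Ample p μ μ₀ m (A \ T) := by
  obtain ⟨hA, -, -⟩ := h
  rw [mul_add_one] at hA
  refine ⟨?_, ?_, ?_⟩
  · rw [card_sdiff_of_subset hTA]; omega
  · rw [card_filter_sdiff hTA]; omega
  · rw [card_filter_sdiff hTA]; omega

theorem Ample.exists_isMixed_sdiff [DecidableEq ι] {p m : ℕ} (hp : 2 ≤ p) {μ : ι → κ}
    {C : Finset κ} (hμ : ∀ i, μ i ∈ C) (hC : #C ≤ p) {μ₀ : κ} {A : Finset ι}
    (h : Ample p μ μ₀ (m + 1) A) :
    ∃ T ⊆ A, IsMixed μ p T ∧ Ample p μ μ₀ m (A \ T) := by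
  have hsplit (T : Finset ι) : #{i ∈ T | μ i = μ₀} + #{i ∈ T | μ i ≠ μ₀} = #T :=
    card_filter_add_card_filter_not _
  obtain ⟨hA, ha, hb⟩ := h
  by_cases hmany : m + p - 1 ≤ #{i ∈ A | μ i = μ₀}
  · obtain ⟨e, he⟩ : {i ∈ A | μ i ≠ μ₀}.Nonempty := card_pos.1 (by omega)
    rw [mem_filter] at he
    obtain ⟨T, hTA, heT, hT, hTμ₀⟩ := exists_mixed_subset (p := p) (by omega) (by omega)
      he.1 he.2
    refine ⟨T, hTA, ⟨hT, μ₀, hTμ₀, e, heT, he.2⟩, Ample.sdiff ⟨hA, ha, hb⟩ hTA hT ?_ ?_⟩ <;>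
      · have := hsplit T
        omega
  · obtain ⟨e, he⟩ : {i ∈ A | μ i = μ₀}.Nonempty := card_pos.1 (by omega)
    rw [mem_filter] at he
    have hothers : (p - 1) * (m + p - 2) < #{i ∈ A | μ i ≠ μ₀} := by
      have hcount : (p - 1) * (m + p - 2) + m + p = p * (m + 1) + (p - 1) * (p - 2) := by
        obtain ⟨q, rfl⟩ : ∃ q, p = q + 2 := ⟨p - 2, by omega⟩
        simp only [Nat.add_sub_cancel, show m + (q + 2) - 2 = m + q by omega,
          show q + 2 - 1 = q + 1 by omega]
        ring
      have := hsplit A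
      omega
    obtain ⟨η, hημ₀, hη⟩ := exists_lt_card_filter_eq_of_mul_lt hμ hC (he.2 ▸ hμ e) hothers
    have heη : μ e ≠ η := he.2.trans_ne hημ₀.symm
    obtain ⟨T, hTA, heT, hT, hTη⟩ := exists_mixed_subset (p := p) (by omega) (by omega)
      he.1 heη
    have hT₀ : 1 ≤ #{i ∈ T | μ i = μ₀} := card_pos.2 ⟨e, mem_filter.2 ⟨heT, he.2⟩⟩
    have hT₁ := card_filter_eq_le_card_filter_ne μ T hημ₀
    have hA₁ := card_filter_eq_le_card_filter_ne μ A hημ₀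
    refine ⟨T, hTA, ⟨hT, η, hTη, e, heT, heη⟩, Ample.sdiff ⟨hA, ha, hb⟩ hTA hT ?_ ?_⟩ <;>
      · have := hsplit T
        omega

theorem Ample.exists_pairwise_disjoint_isMixed [DecidableEq ι] {p x : ℕ} (hp : 2 ≤ p)
    {μ : ι → κ} {C : Finset κ} (hμ : ∀ i, μ i ∈ C) (hC : #C ≤ p) {μ₀ : κ} {A : Finset ι}
    (h : Ample p μ μ₀ x A) :
    ∃ S : Fin x → Finset ι,
      (∀ i, S i ⊆ A) ∧ Pairwise (Disjoint on S) ∧ ∀ i, IsMixed μ p (S i) :=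
  exists_pairwise_disjoint_of_step (fun _ _ hA => hA.exists_isMixed_sdiff hp hμ hC) x A h

end Selection

theorem stmt_15_general (p x n μ₀ : ℕ) (hp : p.Prime)
    (hn : p * x + p ^ 2 - 3 * p + 3 ≤ n)
    (μ : Fin n → ℕ) (hμ : ∀ i, μ i ≤ p - 1)
    (hx₁ : x ≤ (Finset.univ.filter (fun i => μ i = μ₀)).card)
    (hx₂ : x ≤ (Finset.univ.filter (fun i => μ i ≠ μ₀)).card) :
    ∃ S : Fin x → Finset (Fin n),
      (∀ i j, i ≠ j → Disjoint (S i) (S j)) ∧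
      ∀ i, (S i).card = p ∧
        ∃ η, ((S i).filter (fun j => μ j = η)).card = p - 1 ∧
          ∃ j ∈ S i, μ j ≠ η := by
  have hp2 := hp.two_le
  have hpsq : (p - 1) * (p - 2) + 3 * p = p ^ 2 + 2 := by
    obtain ⟨q, rfl⟩ : ∃ q, p = q + 2 := ⟨p - 2, by omega⟩
    simp only [show q + 2 - 1 = q + 1 by omega, Nat.add_sub_cancel]
    ring
  have hA : Ample p μ μ₀ x Finset.univ :=
    ⟨by rw [Finset.card_univ, Fintype.card_fin]; omega, hx₁, hx₂⟩
  obtain ⟨S, -, hdisj, hmixed⟩ := hA.exists_pairwise_disjoint_isMixed hp2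
    (C := Finset.range p) (fun i => Finset.mem_range.2 (by have := hμ i; omega)) (by simp)
  exact ⟨S, fun i j hij => hdisj hij, hmixed⟩

theorem stmt_15 (p x n μ₀ : ℕ) (hp : p.Prime)
    (hn : p * x + p ^ 2 - 3 * p + 3 ≤ n)
    (μ : Fin n → ℕ) (hμ : ∀ i, μ i ≤ p - 1) (hμ₀ : μ₀ ≤ p - 1)
    (hx₁ : x ≤ (Finset.univ.filter (fun i => μ i = μ₀)).card)
    (hx₂ : x ≤ (Finset.univ.filter (fun i => μ i ≠ μ₀)).card) :
    ∃ S : Fin x → Finset (Fin n),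
      (∀ i j, i ≠ j → Disjoint (S i) (S j)) ∧
      ∀ i, (S i).card = p ∧
        ∃ η, ((S i).filter (fun j => μ j = η)).card = p - 1 ∧
          ∃ j ∈ S i, μ j ≠ η :=
  stmt_15_general p x n μ₀ hp hn μ hμ hx₁ hx₂
end

section
/- Let p ≥ 5 be a prime, τ ≥ 1, k = p^τ(p-1), and let f = ∑_{i=1}^s a_i x_i^k, g = ∑_{i=1}^s b_i x_i^k be additive forms with integer coefficients. If the congruences ∑ a_i x_i^k ≡ 0 (mod p^{τ+1}) and ∑ b_i x_i^k ≡ 0 (mod p^{τ+1}) have a common integer solution (x_1, ..., x_s) such that the 2×s matrix whose columns are (a_i x_i, b_i x_i)ᵀ has rank 2 modulo p, then the equations f = 0 and g = 0 have a common nonzero solution in the p-adic numbers ℚ_p. -/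
/-!
Write `k = p^τ (p - 1)`. Every `u ≡ 1 (mod p^(τ+1))` in `ℤ_p` is a `k`-th power of a unit: a
`(p-1)`-th root of a `1`-unit exists by Hensel's lemma, and for odd `p` every
`u ≡ 1 (mod p^(n+2))` has a `p`-th root `≡ 1 (mod p^(n+1))` (Hensel at `1 + p^(n+1) c`, then
lifting the exponent), so `p^τ`-th roots are obtained by iteration.

Given the solution `x` modulo `p^(τ+1)` and indices `i, j` with `x_i x_j (a_i b_j - a_j b_i)` a
unit, rescale `x_i` and `x_j` by `k`-th roots of `1 + p^(τ+1) σ` and `1 + p^(τ+1) θ`. This changes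
the two sums by `p^(τ+1)` times a linear form in `(σ, θ)` whose determinant is a unit, so `σ, θ`
can be chosen to make both sums vanish.
-/

open Finset Polynomial

theorem exists_mul_add_mul_eq_of_isUnit_det {R : Type*} [CommRing R] {α β γ δ : R}
    (h : IsUnit (α * δ - β * γ)) (A B : R) :
    ∃ σ θ : R, α * σ + β * θ = A ∧ γ * σ + δ * θ = B := by
  obtain ⟨u, hu⟩ := h
  have hw : (α * δ - β * γ) * ↑u⁻¹ = 1 := by rw [← hu, Units.mul_inv]
  exact ⟨(δ * A - β * B) * ↑u⁻¹, (α * B - γ * A) * ↑u⁻¹,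
    by linear_combination A * hw, by linear_combination B * hw⟩

theorem exists_common_zero_of_isUnit_det {R : Type*} [CommRing R] {s k : ℕ} {π : R}
    (hroot : ∀ e : R, ∃ t : Rˣ, (t : R) ^ k = 1 + π * e) {a b x : Fin s → R}
    (ha : π ∣ ∑ l, a l * x l ^ k) (hb : π ∣ ∑ l, b l * x l ^ k) {i j : Fin s}
    (hdet : IsUnit (a i * x i * (b j * x j) - a j * x j * (b i * x i))) :
    ∃ y : Fin s → R, IsUnit (y i) ∧ ∑ l, a l * y l ^ k = 0 ∧ ∑ l, b l * y l ^ k = 0 := by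
  rw [show a i * x i * (b j * x j) - a j * x j * (b i * x i)
      = x i * x j * (a i * b j - a j * b i) by ring, IsUnit.mul_iff, IsUnit.mul_iff] at hdet
  obtain ⟨⟨hxi, hxj⟩, hΔ⟩ := hdet
  have hdetk : IsUnit (a i * x i ^ k * (b j * x j ^ k) - a j * x j ^ k * (b i * x i ^ k)) := by
    rw [show a i * x i ^ k * (b j * x j ^ k) - a j * x j ^ k * (b i * x i ^ k)
      = x i ^ k * x j ^ k * (a i * b j - a j * b i) by ring]
    exact ((hxi.pow k).mul (hxj.pow k)).mul hΔ
  obtain ⟨A, hA⟩ := ha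
  obtain ⟨B, hB⟩ := hb
  obtain ⟨σ, θ, hσθA, hσθB⟩ := exists_mul_add_mul_eq_of_isUnit_det hdetk (-A) (-B)
  choose t ht using fun l => hroot ((Pi.single i σ : Fin s → R) l + (Pi.single j θ : Fin s → R) l)
  have hsum : ∀ c : Fin s → R, ∑ l, c l * (x l * t l) ^ k
      = ∑ l, c l * x l ^ k + π * (c i * x i ^ k * σ + c j * x j ^ k * θ) := by
    intro c
    simp only [mul_pow, ht, Pi.single_apply, mul_add, mul_ite, mul_zero, mul_one, sum_add_distrib,
      sum_ite_eq', mem_univ, ↓reduceIte, add_right_inj]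
    ring
  refine ⟨fun l => x l * t l, hxi.mul (t i).isUnit, ?_, ?_⟩
  · rw [hsum, hA]; linear_combination π * hσθA
  · rw [hsum, hB]; linear_combination π * hσθB

theorem dvd_sub_one_of_dvd_pow_prime_sub_one {R : Type*} [CommRing R] [IsDomain R] {p : ℕ}
    (hp : Prime (p : R)) (hodd : Odd p) {z : R} (hz : (p : R) ∣ z - 1) {n : ℕ}
    (h : (p : R) ^ (n + 1) ∣ z ^ p - 1) : (p : R) ^ n ∣ z - 1 := by
  have hz' : ¬ (p : R) ∣ z := fun hpz =>
    hp.not_isUnit (isUnit_of_dvd_one (by simpa using dvd_sub hpz hz))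
  have hlte := emultiplicity_pow_prime_sub_pow_prime (y := 1) hp hodd (by simpa using hz) hz'
  rw [one_pow] at hlte
  rw [pow_dvd_iff_le_emultiplicity, hlte, Nat.cast_add, Nat.cast_one] at h
  rw [pow_dvd_iff_le_emultiplicity]
  exact (ENat.add_le_add_iff_right ENat.one_ne_top).1 h

theorem pow_add_three_dvd_one_add_pow_mul_pow_sub {R : Type*} [CommRing R] {p : ℕ} (hodd : Odd p)
    (n : ℕ) (c : R) :
    (p : R) ^ (n + 3) ∣ (1 + p ^ (n + 1) * c) ^ p - (1 + p ^ (n + 2) * c) := by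
  obtain ⟨d, hd⟩ := odd_sq_dvd_geom_sum₂_sub (1 : R) (p ^ n * c) hodd
  have hgeom := geom_sum₂_mul (1 + (p : R) * (p ^ n * c)) 1 p
  simp only [one_pow, mul_one] at hgeom hd
  exact ⟨d * c, by linear_combination ((p : R) ^ (n + 1) * c) * hd - hgeom⟩

namespace PadicInt

variable {p : ℕ} [Fact p.Prime]

theorem isUnit_of_dvd_sub_one {u : ℤ_[p]} (h : (p : ℤ_[p]) ∣ u - 1) : IsUnit u := by
  refine IsLocalRing.isUnit_of_mem_nonunits_one_sub_self u ?_
  rw [mem_nonunits, norm_lt_one_iff_dvd, ← dvd_neg, neg_sub]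
  exact h

theorem exists_pow_eq_of_coprime {m : ℕ} (hm : p.Coprime m) {v : ℤ_[p]}
    (hv : (p : ℤ_[p]) ∣ v - 1) : ∃ t : ℤ_[p], t ^ m = v := by
  have hnorm : ‖(X ^ m - C v).aeval (1 : ℤ_[p])‖
      < ‖(derivative (X ^ m - C v)).aeval (1 : ℤ_[p])‖ ^ 2 := by
    simp only [map_sub, map_pow, aeval_X, aeval_C, one_pow, derivative_X_pow,
      derivative_C, sub_zero, map_mul, map_natCast, mul_one]
    rw [norm_natCast_eq_one_iff.2 hm, one_pow, norm_sub_rev, norm_lt_one_iff_dvd]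
    exact hv
  obtain ⟨t, ht, -⟩ := hensels_lemma hnorm
  exact ⟨t, by simpa [sub_eq_zero] using ht⟩

theorem norm_p_lt_one : ‖(p : ℤ_[p])‖ < 1 :=
  (norm_lt_one_iff_dvd _).2 dvd_rfl

theorem isUnit_intCast_iff {z : ℤ} : IsUnit (z : ℤ_[p]) ↔ ¬ (p : ℤ) ∣ z := by
  rw [isUnit_iff, ← norm_intCast_lt_one_iff, not_lt]
  exact ⟨fun h => h.ge, (norm_le_one _).antisymm⟩

theorem norm_lt_norm_p_sq_of_dvd {z : ℤ_[p]} (h : (p : ℤ_[p]) ^ 3 ∣ z) :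
    ‖z‖ < ‖(p : ℤ_[p])‖ ^ 2 := by
  obtain ⟨r, rfl⟩ := h
  have hp0 : 0 < ‖(p : ℤ_[p])‖ := by simp [Nat.Prime.pos Fact.out]
  calc ‖(p : ℤ_[p]) ^ 3 * r‖ ≤ ‖(p : ℤ_[p])‖ ^ 3 := by
        simpa [norm_mul, norm_pow] using
          mul_le_of_le_one_right (pow_nonneg hp0.le 3) (norm_le_one r)
    _ < ‖(p : ℤ_[p])‖ ^ 2 := pow_lt_pow_right_of_lt_one₀ hp0 norm_p_lt_one (by norm_num)

theorem exists_pow_prime_eq (hodd : Odd p) (n : ℕ) {u : ℤ_[p]}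
    (hu : (p : ℤ_[p]) ^ (n + 2) ∣ u - 1) :
    ∃ w : ℤ_[p], w ^ p = u ∧ (p : ℤ_[p]) ^ (n + 1) ∣ w - 1 := by
  obtain ⟨c, hc⟩ := hu
  set a : ℤ_[p] := 1 + p ^ (n + 1) * c
  have ha : (p : ℤ_[p]) ∣ a - 1 := ⟨p ^ n * c, by ring⟩
  have hFa : (p : ℤ_[p]) ^ 3 ∣ a ^ p - u := by
    rw [show u = 1 + p ^ (n + 2) * c by linear_combination hc]
    exact (pow_dvd_pow _ (by omega)).trans (pow_add_three_dvd_one_add_pow_mul_pow_sub hodd n c)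
  have hF'a : ‖(derivative (X ^ p - C u)).aeval a‖ = ‖(p : ℤ_[p])‖ := by
    simp [derivative_X_pow, isUnit_iff.1 (isUnit_of_dvd_sub_one ha)]
  obtain ⟨z, hz, hza, -⟩ := hensels_lemma (F := X ^ p - C u) (a := a) (by
    rw [hF'a]
    simpa using norm_lt_norm_p_sq_of_dvd hFa)
  have hzu : z ^ p = u := by simpa [sub_eq_zero] using hz
  have hz1 : (p : ℤ_[p]) ∣ z - 1 := by
    rw [hF'a] at hza
    simpa using dvd_add ((norm_lt_one_iff_dvd _).1 (hza.trans norm_p_lt_one)) ha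
  exact ⟨z, hzu, dvd_sub_one_of_dvd_pow_prime_sub_one prime_p hodd hz1 (by rw [hzu]; exact ⟨c, hc⟩)⟩

theorem exists_pow_prime_pow_eq (hodd : Odd p) (τ : ℕ) {u : ℤ_[p]}
    (hu : (p : ℤ_[p]) ^ (τ + 1) ∣ u - 1) : ∃ v : ℤ_[p], v ^ p ^ τ = u ∧ (p : ℤ_[p]) ∣ v - 1 := by
  induction τ generalizing u with
  | zero => exact ⟨u, by simp, by simpa using hu⟩
  | succ τ ih =>
    obtain ⟨w, hwu, hw⟩ := exists_pow_prime_eq hodd τ hu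
    obtain ⟨v, hvw, hv⟩ := ih hw
    exact ⟨v, by rw [pow_succ, pow_mul, hvw, hwu], hv⟩

theorem exists_unit_pow_eq (hodd : Odd p) {m : ℕ} (hm : p.Coprime m) (τ : ℕ) {u : ℤ_[p]}
    (hu : (p : ℤ_[p]) ^ (τ + 1) ∣ u - 1) : ∃ t : ℤ_[p]ˣ, (t : ℤ_[p]) ^ (p ^ τ * m) = u := by
  obtain ⟨v, hvu, hv⟩ := exists_pow_prime_pow_eq hodd τ hu
  obtain ⟨t, htv⟩ := exists_pow_eq_of_coprime hm hv
  have htu : t ^ (p ^ τ * m) = u := by rw [mul_comm, pow_mul, htv, hvu]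
  have hp : p.Prime := Fact.out
  have hm0 : m ≠ 0 := by rintro rfl; exact hp.ne_one (Nat.coprime_zero_right _ |>.1 hm)
  have ht : IsUnit t := (isUnit_pow_iff (mul_ne_zero (pow_ne_zero _ hp.ne_zero) hm0)).1
    (htu ▸ isUnit_of_dvd_sub_one ((dvd_pow_self _ τ.succ_ne_zero).trans hu))
  exact ⟨ht.unit, htu⟩

end PadicInt

theorem stmt_16_general (p τ s : ℕ) [hp : Fact p.Prime] (hp5 : 5 ≤ p)
    (a b : Fin s → ℤ)
    (h : ∃ x : Fin s → ℤ,
      (p : ℤ) ^ (τ + 1) ∣ ∑ i, a i * x i ^ (p ^ τ * (p - 1)) ∧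
      (p : ℤ) ^ (τ + 1) ∣ ∑ i, b i * x i ^ (p ^ τ * (p - 1)) ∧
      ∃ i j, ¬ (p : ℤ) ∣ (a i * x i) * (b j * x j) - (a j * x j) * (b i * x i)) :
    ∃ y : Fin s → ℚ_[p], y ≠ 0 ∧
      ∑ i, (a i : ℚ_[p]) * y i ^ (p ^ τ * (p - 1)) = 0 ∧
      ∑ i, (b i : ℚ_[p]) * y i ^ (p ^ τ * (p - 1)) = 0 := by
  obtain ⟨x, ha, hb, i, j, hdet⟩ := h
  have hodd : Odd p := hp.out.odd_of_ne_two (by omega)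
  have hcop : p.Coprime (p - 1) :=
    (Nat.Prime.coprime_iff_not_dvd hp.out).2 (Nat.not_dvd_of_pos_of_lt (by omega) (by omega))
  obtain ⟨y, hyi, hya, hyb⟩ := exists_common_zero_of_isUnit_det
    (fun e => PadicInt.exists_unit_pow_eq hodd hcop τ (u := 1 + (p : ℤ_[p]) ^ (τ + 1) * e)
      (by simp))
    (a := fun l => a l) (b := fun l => b l) (x := fun l => x l)
    (by simpa using map_dvd (Int.castRingHom ℤ_[p]) ha)
    (by simpa using map_dvd (Int.castRingHom ℤ_[p]) hb)
    (j := j) (by simpa using PadicInt.isUnit_intCast_iff.2 hdet)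
  refine ⟨fun l => y l, fun hy => hyi.ne_zero (by simpa using congrFun hy i), ?_, ?_⟩
  · simpa using congrArg (fun z : ℤ_[p] => (z : ℚ_[p])) hya
  · simpa using congrArg (fun z : ℤ_[p] => (z : ℚ_[p])) hyb

theorem stmt_16 (p τ s : ℕ) [hp : Fact p.Prime] (hp5 : 5 ≤ p) (hτ : 1 ≤ τ)
    (a b : Fin s → ℤ)
    (h : ∃ x : Fin s → ℤ,
      (p : ℤ) ^ (τ + 1) ∣ ∑ i, a i * x i ^ (p ^ τ * (p - 1)) ∧
      (p : ℤ) ^ (τ + 1) ∣ ∑ i, b i * x i ^ (p ^ τ * (p - 1)) ∧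
      ∃ i j, ¬ (p : ℤ) ∣ (a i * x i) * (b j * x j) - (a j * x j) * (b i * x i)) :
    ∃ y : Fin s → ℚ_[p], y ≠ 0 ∧
      ∑ i, (a i : ℚ_[p]) * y i ^ (p ^ τ * (p - 1)) = 0 ∧
      ∑ i, (b i : ℚ_[p]) * y i ^ (p ^ τ * (p - 1)) = 0 :=
  stmt_16_general p τ s (hp := hp) hp5 a b h
end
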